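/- arXiv:1209.2170 — 6 statements merged into one kernel-verified Lean document; each statement's English description precedes it below -/
import Mathlib

section
/- Let (X,d) be a compact metric space with more than one point and let f : X → X be a surjective continuous map with the specification property. Then for every integer n > 0 there exists a point z ∈ X such that inf_{i ≥ 0} d(fⁱ(z), f^{i+n}(z)) > 0. -/
open Filter Set

/-- The specification property of Bowen: for every `ε > 0` there is `N > 0` such that any
finite collection of orbit segments, spaced at least `N` apart in time, can be `ε`-traced
by the orbit of a single point. -/
def SpecProp {X : Type*} [MetricSpace X] (f : X → X) : Prop :=
  ∀ ε : ℝ, 0 < ε → ∃ N : ℕ, 0 < N ∧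
    ∀ (s : ℕ) (hs : 2 ≤ s), ∀ (y : Fin s → X) (j k : Fin s → ℕ),
      j ⟨0, by omega⟩ = 0 →
      (∀ m, j m ≤ k m) →
      (∀ m : Fin s, ∀ h : (m : ℕ) + 1 < s, k m + N ≤ j ⟨(m : ℕ) + 1, h⟩) →
      ∃ x : X, ∀ m : Fin s, ∀ i : ℕ, j m ≤ i → i ≤ k m →
        dist (f^[i] x) (f^[i] (y m)) < ε

theorem exists_point_separated_from_shifted_orbit
    {X : Type*} [MetricSpace X] [CompactSpace X] [Nontrivial X]
    (f : X → X) (hf : Continuous f) (hsurj : Function.Surjective f)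
    (hspec : SpecProp f) :
    ∀ n : ℕ, 0 < n → ∃ z : X, 0 < ⨅ i : ℕ, dist (f^[i] z) (f^[i + n] z) := by
  intro n hn
  -- Step 1: there is a point not fixed by `f^[n]`.
  have hexu : ∃ u : X, f^[n] u ≠ u := by
    by_contra hco
    push_neg at hco
    have hfid : f^[n] = id := funext hco
    obtain ⟨a, b, hab⟩ := exists_pair_ne X
    have hD : 0 < dist a b := dist_pos.2 hab
    obtain ⟨N₁, hN₁, hspec₁⟩ := hspec (dist a b / 3) (by linarith)
    have hgap : ∀ m : Fin 2, ∀ h : (m : ℕ) + 1 < 2,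
        ![0, n * N₁] m + N₁ ≤ ![0, n * N₁] ⟨(m : ℕ) + 1, h⟩ := by
      intro m h
      fin_cases m
      · show (0 : ℕ) + N₁ ≤ n * N₁
        simpa using Nat.le_mul_of_pos_left N₁ hn
      · simp at h
    obtain ⟨x, hx⟩ := hspec₁ 2 le_rfl ![a, b] ![0, n * N₁] ![0, n * N₁]
      rfl (fun m => le_rfl) hgap
    have h0 := hx 0 0 (by simp) (by simp)
    have h1 := hx 1 (n * N₁) (by simp) (by simp)
    simp only [Matrix.cons_val_zero, Matrix.cons_val_one, Matrix.head_cons,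
      Function.iterate_zero, id_eq] at h0 h1
    have hit : f^[n * N₁] = id := by
      rw [Function.iterate_mul, hfid, Function.iterate_id]
    rw [hit] at h1
    simp only [id_eq] at h1
    have := dist_triangle a x b
    rw [dist_comm a x] at this
    linarith
  obtain ⟨u, hu⟩ := hexu
  set Δ := dist u (f^[n] u) with hΔdef
  have hΔ : 0 < Δ := dist_pos.2 (Ne.symm hu)
  obtain ⟨N, hN, hsp⟩ := hspec (Δ / 4) (by linarith)
  set M := n + N with hMdef
  have hM : 0 < M := by omega
  -- preimages of u at times m*M
  have hwex : ∀ m : ℕ, ∃ w : X, f^[m * M] w = u := fun m => (hsurj.iterate (m * M)) u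
  choose w hw using hwex
  -- tracing points for finitely many blocks
  have hxex : ∀ s : ℕ, ∃ x : X, ∀ m : ℕ, m ≤ s + 1 →
      dist (f^[m * M] x) u < Δ / 4 ∧ dist (f^[m * M + n] x) (f^[n] u) < Δ / 4 := by
    intro s
    have hgap : ∀ m : Fin (s + 2), ∀ h : (m : ℕ) + 1 < s + 2,
        (m : ℕ) * M + n + N ≤ ((⟨(m : ℕ) + 1, h⟩ : Fin (s + 2)) : ℕ) * M := by
      intro m h
      show (m : ℕ) * M + n + N ≤ ((m : ℕ) + 1) * M
      exact le_of_eq (by rw [hMdef]; ring)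
    obtain ⟨x, hx⟩ := hsp (s + 2) (by omega) (fun m => w (m : ℕ))
      (fun m => (m : ℕ) * M) (fun m => (m : ℕ) * M + n)
      (by simp) (fun m => Nat.le_add_right _ _) hgap
    refine ⟨x, fun m hm => ?_⟩
    have hmlt : m < s + 2 := by omega
    have h1 := hx ⟨m, hmlt⟩ (m * M) le_rfl (Nat.le_add_right _ _)
    have h2 := hx ⟨m, hmlt⟩ (m * M + n) (Nat.le_add_right _ _) le_rfl
    simp only at h1 h2
    constructor
    · rwa [hw] at h1
    · rwa [show f^[m * M + n] (w m) = f^[n] u by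
        rw [add_comm, Function.iterate_add_apply, hw]] at h2
  choose x hxprop using hxex
  obtain ⟨z, -, φ, hφmono, hφconv⟩ := isCompact_univ.tendsto_subseq
    (fun s => Set.mem_univ (x s))
  -- limit point z traces all blocks
  have hz : ∀ m : ℕ, dist (f^[m * M] z) u ≤ Δ / 4 ∧
      dist (f^[m * M + n] z) (f^[n] u) ≤ Δ / 4 := by
    intro m
    have hc1 : Tendsto (fun s => dist (f^[m * M] (x (φ s))) u) atTop
        (nhds (dist (f^[m * M] z) u)) :=
      (((hf.iterate (m * M)).tendsto z).comp hφconv).dist tendsto_const_nhds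
    have hc2 : Tendsto (fun s => dist (f^[m * M + n] (x (φ s))) (f^[n] u)) atTop
        (nhds (dist (f^[m * M + n] z) (f^[n] u))) :=
      (((hf.iterate (m * M + n)).tendsto z).comp hφconv).dist tendsto_const_nhds
    constructor
    · refine le_of_tendsto hc1 ?_
      filter_upwards [eventually_ge_atTop m] with s hs
      have hms : m ≤ φ s + 1 := le_trans (le_trans hs hφmono.le_apply) (Nat.le_succ _)
      exact (hxprop (φ s) m hms).1.le
    · refine le_of_tendsto hc2 ?_
      filter_upwards [eventually_ge_atTop m] with s hs
      have hms : m ≤ φ s + 1 := le_trans (le_trans hs hφmono.le_apply) (Nat.le_succ _)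
      exact (hxprop (φ s) m hms).2.le
  have hsep : ∀ m : ℕ, Δ / 2 ≤ dist (f^[m * M] z) (f^[m * M + n] z) := by
    intro m
    obtain ⟨h1, h2⟩ := hz m
    have htri : dist u (f^[n] u) ≤ dist u (f^[m * M] z)
        + dist (f^[m * M] z) (f^[m * M + n] z)
        + dist (f^[m * M + n] z) (f^[n] u) := dist_triangle4 _ _ _ _
    rw [← hΔdef] at htri
    rw [dist_comm] at h1
    linarith
  -- uniform continuity moduli
  have hηex : ∀ t : ℕ, ∃ η > (0 : ℝ), ∀ a b : X,
      dist a b < η → dist (f^[t] a) (f^[t] b) < Δ / 2 := by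
    intro t
    have huc := CompactSpace.uniformContinuous_of_continuous (hf.iterate t)
    obtain ⟨δ, hδ, hδ'⟩ := Metric.uniformContinuous_iff.mp huc (Δ / 2) (by linarith)
    exact ⟨δ, hδ, fun a b h => hδ' h⟩
  choose η hηpos hη using hηex
  have hne : (Finset.range (M + 1)).Nonempty := ⟨0, Finset.mem_range.2 (by omega)⟩
  set η₀ := (Finset.range (M + 1)).inf' hne η with hη₀def
  have hη₀pos : 0 < η₀ := by
    rw [hη₀def, Finset.lt_inf'_iff]
    exact fun i _ => hηpos i
  have hη₀le : ∀ t ≤ M, η₀ ≤ η t := fun t ht =>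
    Finset.inf'_le _ (Finset.mem_range.2 (by omega))
  -- the key lower bound
  have hbound : ∀ i : ℕ, η₀ ≤ dist (f^[i] z) (f^[i + n] z) := by
    intro i
    by_contra hcon
    push_neg at hcon
    have hA : i / M * M ≤ i := Nat.div_mul_le_self i M
    have hB : i < (i / M + 1) * M := by
      have h1 := Nat.div_add_mod i M
      have h2 := Nat.mod_lt i hM
      calc i = M * (i / M) + i % M := h1.symm
        _ < M * (i / M) + M := Nat.add_lt_add_left h2 _
        _ = (i / M + 1) * M := by ring
    set m := i / M + 1 with hmdef
    set J := m * M with hJdef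
    have hJ2 : J = i / M * M + M := by rw [hJdef, hmdef]; ring
    have hiJ : i ≤ J := hB.le
    have hJle : J ≤ i + M := by
      rw [hJ2]
      exact Nat.add_le_add_right hA M
    set t := J - i with htdef
    have htM : t ≤ M := by omega
    have hti : t + i = J := by omega
    have hdist := hη t (f^[i] z) (f^[i + n] z)
      (lt_of_lt_of_le hcon (hη₀le t htM))
    rw [← Function.iterate_add_apply, ← Function.iterate_add_apply] at hdist
    have he1 : t + i = J := hti
    have he2 : t + (i + n) = J + n := by omega
    rw [he1, he2] at hdist
    have := hsep m
    rw [← hJdef] at this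
    linarith
  exact ⟨z, lt_of_lt_of_le hη₀pos (le_ciInf hbound)⟩
end

section
/- Let (X,d) be a compact metric space with more than one point and let f : X → X be a surjective continuous map with the specification property. Then there exist ε > 0 and a sequence of points {z_n}_{n=1}^∞ ⊆ X such that inf_{i ≥ 0} d(fⁱ(z_n), f^{i+n}(z_n)) ≥ ε for every integer n ≥ 1. -/
open Filter Set

theorem exists_forall_mem_of_forall_le_mem {X : Type*} [TopologicalSpace X] [CompactSpace X]
    {P : ℕ → Set X} (hP : ∀ m, IsClosed (P m)) (h : ∀ K, ∃ x, ∀ m ≤ K, x ∈ P m) :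
    ∃ z, ∀ m, z ∈ P m := by
  have hclosed (K : ℕ) : IsClosed (dissipate P K) := isClosed_biInter fun m _ => hP m
  obtain ⟨z, hz⟩ := IsCompact.nonempty_iInter_of_sequence_nonempty_isCompact_isClosed
    (dissipate P) (fun K => dissipate_subset_dissipate K.le_succ)
    (fun K => (h K).imp fun x hx => mem_dissipate.2 hx) (hclosed 0).isCompact hclosed
  exact ⟨z, fun m => mem_dissipate.1 (mem_iInter.1 hz m) m le_rfl⟩

theorem exists_forall_dist_iterate_lt {X : Type*} [PseudoMetricSpace X] [CompactSpace X]
    {f : X → X} (hf : Continuous f) (W : ℕ) {s : ℝ} (hs : 0 < s) :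
    ∃ ρ > 0, ∀ x y, dist x y < ρ → ∀ c ≤ W, dist (f^[c] x) (f^[c] y) < s := by
  have : UniformEquicontinuous fun c : Fin (W + 1) => f^[c] :=
    uniformEquicontinuous_finite.2 fun c => CompactSpace.uniformContinuous_of_continuous
      (hf.iterate c)
  obtain ⟨ρ, hρ, hρs⟩ := Metric.uniformEquicontinuous_iff.1 this s hs
  exact ⟨ρ, hρ, fun x y hxy c hc => hρs x y hxy ⟨c, Nat.lt_succ_of_le hc⟩⟩

theorem exists_le_mul_dist_succ {X : Type*} [PseudoMetricSpace X] (x : ℕ → X) {k : ℕ}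
    (hk : 0 < k) : ∃ j < k, dist (x 0) (x k) ≤ k * dist (x j) (x (j + 1)) := by
  have hsum : ∑ _j ∈ Finset.range k, dist (x 0) (x k) / k
      ≤ ∑ j ∈ Finset.range k, dist (x j) (x (j + 1)) := by
    rw [Finset.sum_const, Finset.card_range, nsmul_eq_mul, mul_div_cancel₀ _ (by positivity)]
    exact dist_le_range_sum_dist x k
  obtain ⟨j, hj, hle⟩ := Finset.exists_le_of_sum_le (Finset.nonempty_range_iff.2 hk.ne') hsum
  refine ⟨j, Finset.mem_range.1 hj, ?_⟩
  rwa [div_le_iff₀' (by positivity)] at hle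

namespace SpecProp

variable {X : Type*} [MetricSpace X] {f : X → X}

theorem exists_forall_le_dist_iterate_lt (hspec : SpecProp f) {ε : ℝ} (hε : 0 < ε) :
    ∃ N > 0, ∀ τ : ℕ → ℕ, τ 0 = 0 → (∀ m, τ m + N ≤ τ (m + 1)) → ∀ (y : ℕ → X) (K : ℕ),
      ∃ x, ∀ m ≤ K, dist (f^[τ m] x) (f^[τ m] (y m)) < ε := by
  obtain ⟨N, hN, htrace⟩ := hspec ε hε
  refine ⟨N, hN, fun τ hτ0 hτ y K => ?_⟩
  obtain ⟨x, hx⟩ := htrace (K + 2) (by omega) (fun m => y m) (fun m => τ m) (fun m => τ m)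
    hτ0 (fun _ => le_rfl) (fun m _ => hτ m)
  exact ⟨x, fun m hm => hx ⟨m, by omega⟩ (τ m) le_rfl le_rfl⟩

theorem exists_forall_mem_dist_iterate_le [CompactSpace X] (hspec : SpecProp f)
    (hf : Continuous f) (hsurj : Function.Surjective f) {ε : ℝ} (hε : 0 < ε) :
    ∃ N > 0, ∀ S : Set ℕ, 0 ∈ S → S.Infinite → (∀ s ∈ S, ∀ t ∈ S, s < t → s + N ≤ t) →
      ∀ a : ℕ → X, ∃ z, ∀ t ∈ S, dist (f^[t] z) (a t) ≤ ε := by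
  obtain ⟨N, hN, htrace⟩ := hspec.exists_forall_le_dist_iterate_lt hε
  refine ⟨N, hN, fun S hS0 hS hsep a => ?_⟩
  set τ := Nat.nth (· ∈ S)
  have hτS (m : ℕ) : τ m ∈ S := Nat.nth_mem_of_infinite hS m
  choose y hy using fun m => hsurj.iterate (τ m) (a (τ m))
  obtain ⟨z, hz⟩ := exists_forall_mem_of_forall_le_mem
    (P := fun m => {x | dist (f^[τ m] x) (a (τ m)) ≤ ε})
    (fun m => isClosed_le ((hf.iterate _).dist continuous_const) continuous_const)
    (fun K => (htrace τ (Nat.nth_zero_of_zero hS0)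
      (fun m => hsep _ (hτS m) _ (hτS (m + 1)) (Nat.nth_strictMono hS m.lt_succ_self)) y K).imp
        fun x hx m hm => by simpa [hy] using (hx m hm).le)
  refine ⟨z, fun t ht => ?_⟩
  obtain ⟨m, rfl⟩ : t ∈ range τ := (Nat.range_nth_of_infinite hS).symm ▸ ht
  exact hz m

end SpecProp

/-- An `L`-periodic set of times, `N`-separated and meeting every window `[i, i + 2 * N]`
(for `0 < N ≤ L`). -/
def blockGrid (L N : ℕ) : Set ℕ :=
  {t | ∃ m r, (r + 1) * N ≤ L ∧ t = m * L + r * N}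

namespace blockGrid

variable {L N : ℕ}

theorem zero_mem (h : N ≤ L) : 0 ∈ blockGrid L N :=
  ⟨0, 0, by simpa using h, by simp⟩

theorem add_mem {t : ℕ} (ht : t ∈ blockGrid L N) : t + L ∈ blockGrid L N := by
  obtain ⟨m, r, hr, rfl⟩ := ht
  exact ⟨m + 1, r, hr, by ring⟩

theorem infinite (hL : 0 < L) (h : N ≤ L) : (blockGrid L N).Infinite :=
  Set.infinite_of_injective_forall_mem (f := fun m => m * L)
    (fun _ _ hm => Nat.eq_of_mul_eq_mul_right hL hm) fun m => ⟨m, 0, by simpa using h, by simp⟩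

theorem add_le_of_lt {s t : ℕ} (hs : s ∈ blockGrid L N) (ht : t ∈ blockGrid L N) (hst : s < t) :
    s + N ≤ t := by
  obtain ⟨m, r, hr, rfl⟩ := hs
  obtain ⟨m', r', hr', rfl⟩ := ht
  rw [add_one_mul] at hr hr'
  rcases lt_trichotomy m m' with hm | rfl | hm
  · have : (m + 1) * L ≤ m' * L := Nat.mul_le_mul_right L hm
    rw [add_one_mul] at this
    omega
  · have : (r + 1) * N ≤ r' * N :=
      Nat.mul_le_mul_right N (Nat.lt_of_mul_lt_mul_right (a := N) (by omega))
    rw [add_one_mul] at this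
    omega
  · have : (m' + 1) * L ≤ m * L := Nat.mul_le_mul_right L hm
    rw [add_one_mul] at this
    omega

theorem exists_mem_le_add (hN : 0 < N) (h : N ≤ L) (i : ℕ) :
    ∃ t ∈ blockGrid L N, i ≤ t ∧ t ≤ i + 2 * N := by
  have hi : i / L * L + i % L = i := Nat.div_add_mod' i L
  have hs : i % L / N * N + i % L % N = i % L := Nat.div_add_mod' (i % L) N
  have hmod : i % L < L := Nat.mod_lt i (by omega)
  have hmodN : i % L % N < N := Nat.mod_lt _ hN
  set r := i % L / N
  by_cases hr : (r + 2) * N ≤ L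
  · refine ⟨i / L * L + (r + 1) * N, ⟨i / L, r + 1, hr, rfl⟩, ?_⟩
    rw [add_one_mul]
    omega
  · refine ⟨(i / L + 1) * L, ⟨i / L + 1, 0, by simpa using h, by simp⟩, ?_⟩
    rw [add_one_mul]
    rw [add_mul] at hr
    omega

end blockGrid

theorem SpecProp.exists_forall_exists_le_dist_iterate_add {X : Type*} [MetricSpace X]
    [CompactSpace X] [Nontrivial X] {f : X → X} (hspec : SpecProp f) (hf : Continuous f)
    (hsurj : Function.Surjective f) :
    ∃ W : ℕ, ∃ s > 0, ∀ n, 0 < n →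
      ∃ z : X, ∀ i, ∃ c ≤ W, s ≤ dist (f^[i + c] z) (f^[i + c + n] z) := by
  obtain ⟨p, q, hpq⟩ := exists_pair_ne X
  have hD : 0 < dist p q := dist_pos.2 hpq
  obtain ⟨N, hN, hshadow⟩ := hspec.exists_forall_mem_dist_iterate_le hf hsurj (ε := dist p q / 4)
    (by positivity)
  refine ⟨3 * N, dist p q / (2 * (N + 1)), by positivity, fun n hn => ?_⟩
  -- `k * n` is the least multiple of `n` above `N`, so `k ≤ N + 1` and `(k - 1) * n ≤ N`.
  set k := N / n + 1
  have hNL : N ≤ k * n := add_one_mul (N / n) n ▸ (Nat.lt_div_mul_add hn).le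
  set target : ℕ → X := fun t => if Even (t / (k * n)) then p else q
  obtain ⟨z, hz⟩ := hshadow (blockGrid (k * n) N) (blockGrid.zero_mem hNL)
    (blockGrid.infinite (by positivity) hNL) (fun s hs t ht => blockGrid.add_le_of_lt hs ht) target
  have hperiod (t : ℕ) (ht : t ∈ blockGrid (k * n) N) :
      dist p q / 2 ≤ dist (f^[t] z) (f^[t + k * n] z) := by
    have htarget : dist (target t) (target (t + k * n)) = dist p q := by
      by_cases h : Even (t / (k * n)) <;>
        simp [target, Nat.add_div_right t (show 0 < k * n by positivity), Nat.even_add_one, h,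
          dist_comm]
    have := dist_triangle4 (target t) (f^[t] z) (f^[t + k * n] z) (target (t + k * n))
    linarith [hz t ht, hz _ (blockGrid.add_mem ht), dist_comm (target t) (f^[t] z)]
  refine ⟨z, fun i => ?_⟩
  obtain ⟨t, ht, hit, hti⟩ := blockGrid.exists_mem_le_add hN hNL i
  obtain ⟨j, hj, hjk⟩ :=
    exists_le_mul_dist_succ (fun j => f^[t + j * n] z) (k := k) (Nat.succ_pos _)
  simp only [zero_mul, add_zero, add_one_mul, ← add_assoc] at hjk
  have hjn : j * n ≤ N :=
    (Nat.mul_le_mul_right n (Nat.lt_succ_iff.1 hj)).trans (Nat.div_mul_le_self N n)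
  refine ⟨t + j * n - i, by omega, ?_⟩
  rw [show i + (t + j * n - i) = t + j * n by omega, div_le_iff₀ (by positivity)]
  have hk : (k : ℝ) ≤ N + 1 := by exact_mod_cast Nat.succ_le_succ (Nat.div_le_self N n)
  nlinarith [hperiod t ht, dist_nonneg (x := f^[t + j * n] z) (y := f^[t + j * n + n] z)]

theorem exists_uniform_sequence_separated_from_shifted_orbit
    {X : Type*} [MetricSpace X] [CompactSpace X] [Nontrivial X]
    (f : X → X) (hf : Continuous f) (hsurj : Function.Surjective f)
    (hspec : SpecProp f) :
    ∃ ε : ℝ, 0 < ε ∧ ∃ z : ℕ → X, ∀ n : ℕ, 1 ≤ n →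
      ε ≤ ⨅ i : ℕ, dist (f^[i] (z n)) (f^[i + n] (z n)) := by
  obtain ⟨W, s, hs, hsep⟩ := hspec.exists_forall_exists_le_dist_iterate_add hf hsurj
  obtain ⟨ρ, hρ, hρs⟩ := exists_forall_dist_iterate_lt hf W hs
  choose! z hz using hsep
  refine ⟨ρ, hρ, z, fun n hn => le_ciInf fun i => ?_⟩
  obtain ⟨c, hc, hsc⟩ := hz n hn i
  by_contra! hlt
  have := hρs _ _ hlt c hc
  rw [← Function.iterate_add_apply, ← Function.iterate_add_apply, add_comm c, add_comm c,
    add_right_comm] at this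
  linarith
end

section
/- Let (X,d) be a compact metric space with more than one point and let f : X → X be a surjective continuous map with the specification property. Fix any p, q ∈ X, any integer n ≥ 0 and any integer m ≥ 1. Then the set Qₘⁿ(p,q) ⊆ X × X, consisting of all pairs (x,y) such that: (1) there is an integer l > m with d(f^{i+l+n}(x), f^{i+l}(p)) < 1/m and d(f^{i+l}(y), f^{i+l}(q)) < 1/m for all i = 0, 1, …, 2^l, and (2) there is an integer s > m with d(f^{i+s}(x), f^{i+s}(p)) < 1/m and d(f^{i+s+n}(y), f^{i+s}(q)) < 1/m for all i = 0, 1, …, 2^s, is open and dense in X × X. -/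
open Filter Set

theorem Qmn_open_dense
    {X : Type*} [MetricSpace X] [CompactSpace X] [Nontrivial X]
    (f : X → X) (hf : Continuous f) (hsurj : Function.Surjective f)
    (hspec : SpecProp f)
    (p q : X) (n m : ℕ) (hm : 1 ≤ m) :
    IsOpen {xy : X × X |
        (∃ l : ℕ, m < l ∧ ∀ i : ℕ, i ≤ 2 ^ l →
          dist (f^[i + l + n] xy.1) (f^[i + l] p) < 1 / (m : ℝ) ∧
          dist (f^[i + l] xy.2) (f^[i + l] q) < 1 / (m : ℝ)) ∧
        (∃ s : ℕ, m < s ∧ ∀ i : ℕ, i ≤ 2 ^ s →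
          dist (f^[i + s] xy.1) (f^[i + s] p) < 1 / (m : ℝ) ∧
          dist (f^[i + s + n] xy.2) (f^[i + s] q) < 1 / (m : ℝ))} ∧
    Dense {xy : X × X |
        (∃ l : ℕ, m < l ∧ ∀ i : ℕ, i ≤ 2 ^ l →
          dist (f^[i + l + n] xy.1) (f^[i + l] p) < 1 / (m : ℝ) ∧
          dist (f^[i + l] xy.2) (f^[i + l] q) < 1 / (m : ℝ)) ∧
        (∃ s : ℕ, m < s ∧ ∀ i : ℕ, i ≤ 2 ^ s →
          dist (f^[i + s] xy.1) (f^[i + s] p) < 1 / (m : ℝ) ∧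
          dist (f^[i + s + n] xy.2) (f^[i + s] q) < 1 / (m : ℝ))} := by
  have hminv : (0:ℝ) < 1 / (m:ℝ) := by
    apply div_pos one_pos
    exact_mod_cast Nat.lt_of_lt_of_le Nat.zero_lt_one hm
  have hbasic : ∀ (a : ℕ) (c : X),
      IsOpen {xy : X × X | dist (f^[a] xy.1) c < 1 / (m:ℝ)} := fun a c =>
    isOpen_lt (((hf.iterate a).comp continuous_fst).dist continuous_const)
      continuous_const
  have hbasic2 : ∀ (a : ℕ) (c : X),
      IsOpen {xy : X × X | dist (f^[a] xy.2) c < 1 / (m:ℝ)} := fun a c =>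
    isOpen_lt (((hf.iterate a).comp continuous_snd).dist continuous_const)
      continuous_const
  have hopen1 : IsOpen {xy : X × X |
      ∃ l : ℕ, m < l ∧ ∀ i : ℕ, i ≤ 2 ^ l →
        dist (f^[i + l + n] xy.1) (f^[i + l] p) < 1 / (m : ℝ) ∧
        dist (f^[i + l] xy.2) (f^[i + l] q) < 1 / (m : ℝ)} := by
    have hset : {xy : X × X |
        ∃ l : ℕ, m < l ∧ ∀ i : ℕ, i ≤ 2 ^ l →
          dist (f^[i + l + n] xy.1) (f^[i + l] p) < 1 / (m : ℝ) ∧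
          dist (f^[i + l] xy.2) (f^[i + l] q) < 1 / (m : ℝ)} =
        ⋃ l : ℕ, ⋃ _ : m < l, ⋂ i ∈ Finset.range (2 ^ l + 1),
          ({xy : X × X | dist (f^[i + l + n] xy.1) (f^[i + l] p) < 1 / (m:ℝ)} ∩
           {xy : X × X | dist (f^[i + l] xy.2) (f^[i + l] q) < 1 / (m:ℝ)}) := by
      ext xy
      simp only [mem_setOf_eq, mem_iUnion, mem_iInter, mem_inter_iff,
        Finset.mem_range, Nat.lt_succ_iff, exists_prop]
    rw [hset]
    apply isOpen_iUnion; intro l; apply isOpen_iUnion; intro _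
    apply isOpen_biInter_finset; intro i _
    exact (hbasic _ _).inter (hbasic2 _ _)
  have hopen2 : IsOpen {xy : X × X |
      ∃ s : ℕ, m < s ∧ ∀ i : ℕ, i ≤ 2 ^ s →
        dist (f^[i + s] xy.1) (f^[i + s] p) < 1 / (m : ℝ) ∧
        dist (f^[i + s + n] xy.2) (f^[i + s] q) < 1 / (m : ℝ)} := by
    have hset : {xy : X × X |
        ∃ s : ℕ, m < s ∧ ∀ i : ℕ, i ≤ 2 ^ s →
          dist (f^[i + s] xy.1) (f^[i + s] p) < 1 / (m : ℝ) ∧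
          dist (f^[i + s + n] xy.2) (f^[i + s] q) < 1 / (m : ℝ)} =
        ⋃ s : ℕ, ⋃ _ : m < s, ⋂ i ∈ Finset.range (2 ^ s + 1),
          ({xy : X × X | dist (f^[i + s] xy.1) (f^[i + s] p) < 1 / (m:ℝ)} ∩
           {xy : X × X | dist (f^[i + s + n] xy.2) (f^[i + s] q) < 1 / (m:ℝ)}) := by
      ext xy
      simp only [mem_setOf_eq, mem_iUnion, mem_iInter, mem_inter_iff,
        Finset.mem_range, Nat.lt_succ_iff, exists_prop]
    rw [hset]
    apply isOpen_iUnion; intro s; apply isOpen_iUnion; intro _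
    apply isOpen_biInter_finset; intro i _
    exact (hbasic _ _).inter (hbasic2 _ _)
  refine ⟨hopen1.inter hopen2, ?_⟩
  rw [Metric.dense_iff]
  rintro ⟨a, b⟩ r hr
  set ε := min r (1 / (m:ℝ)) with hε
  have hε0 : 0 < ε := lt_min hr hminv
  obtain ⟨N, hN0, hN⟩ := hspec ε hε0
  obtain ⟨p', hp'⟩ := (hsurj.iterate n) p
  obtain ⟨q', hq'⟩ := (hsurj.iterate n) q
  set l := m + N + n + 1 with hl
  set s := l + n + 2 ^ l + N with hs
  have h2l : 1 ≤ 2 ^ l := Nat.one_le_two_pow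
  have h2s : 1 ≤ 2 ^ s := Nat.one_le_two_pow
  have hml : m < l := by omega
  have hms : m < s := by omega
  obtain ⟨x, hx⟩ := hN 3 (by omega) ![a, p', p] ![0, l + n, s]
    ![0, l + n + 2 ^ l, s + 2 ^ s]
    (by simp)
    (by
      intro i; fin_cases i
      · show (0:ℕ) ≤ 0; omega
      · show l + n ≤ l + n + 2 ^ l; omega
      · show s ≤ s + 2 ^ s; omega)
    (by
      intro i hh; fin_cases i
      · show 0 + N ≤ l + n; omega
      · show l + n + 2 ^ l + N ≤ s; omega
      · exact absurd hh (by decide))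
  obtain ⟨y, hy⟩ := hN 3 (by omega) ![b, q, q'] ![0, l, s + n]
    ![0, l + 2 ^ l, s + n + 2 ^ s]
    (by simp)
    (by
      intro i; fin_cases i
      · show (0:ℕ) ≤ 0; omega
      · show l ≤ l + 2 ^ l; omega
      · show s + n ≤ s + n + 2 ^ s; omega)
    (by
      intro i hh; fin_cases i
      · show 0 + N ≤ l; omega
      · show l + 2 ^ l + N ≤ s + n; omega
      · exact absurd hh (by decide))
  have hεm : ε ≤ 1 / (m:ℝ) := min_le_right _ _
  -- evaluate the vector entries
  have hx0 := hx ⟨0, by omega⟩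
  have hx1 := hx ⟨1, by omega⟩
  have hx2 := hx ⟨2, by omega⟩
  have hy0 := hy ⟨0, by omega⟩
  have hy1 := hy ⟨1, by omega⟩
  have hy2 := hy ⟨2, by omega⟩
  simp only [Fin.mk_zero, Fin.mk_one, Matrix.cons_val_zero, Matrix.cons_val_one,
    Matrix.head_cons] at hx0 hx1 hy0 hy1
  simp only [show ((⟨2, by omega⟩ : Fin 3) : Fin 3) = 2 from rfl,
    Matrix.cons_val_two, Matrix.tail_cons, Matrix.head_cons] at hx2 hy2
  refine ⟨⟨x, y⟩, ?_, ?_, ?_⟩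
  · rw [Metric.mem_ball, Prod.dist_eq]
    have h1 : dist (f^[0] x) (f^[0] a) < ε := hx0 0 (Nat.le_refl _) (Nat.zero_le _)
    have h2 : dist (f^[0] y) (f^[0] b) < ε := hy0 0 (Nat.le_refl _) (Nat.zero_le _)
    simp only [Function.iterate_zero, id_eq] at h1 h2
    exact max_lt (lt_of_lt_of_le h1 (min_le_left _ _))
      (lt_of_lt_of_le h2 (min_le_left _ _))
  · refine ⟨l, hml, fun i hi => ?_⟩
    constructor
    · have h1 : dist (f^[i + l + n] x) (f^[i + l + n] p') < ε :=
        hx1 (i + l + n) (by omega) (by omega)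
      have heq : f^[i + l + n] p' = f^[i + l] p := by
        rw [show i + l + n = (i + l) + n by omega, Function.iterate_add_apply, hp']
      rw [heq] at h1
      exact lt_of_lt_of_le h1 hεm
    · have h2 : dist (f^[i + l] y) (f^[i + l] q) < ε :=
        hy1 (i + l) (by omega) (by omega)
      exact lt_of_lt_of_le h2 hεm
  · refine ⟨s, hms, fun i hi => ?_⟩
    constructor
    · have h1 : dist (f^[i + s] x) (f^[i + s] p) < ε :=
        hx2 (i + s) (by omega) (by omega)
      exact lt_of_lt_of_le h1 hεm
    · have h2 : dist (f^[i + s + n] y) (f^[i + s + n] q') < ε :=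
        hy2 (i + s + n) (by omega) (by omega)
      have heq : f^[i + s + n] q' = f^[i + s] q := by
        rw [show i + s + n = (i + s) + n by omega, Function.iterate_add_apply, hq']
      rw [heq] at h2
      exact lt_of_lt_of_le h2 hεm
end

section
/- Let (X,d) be a compact metric space with more than one point, let f : X → X be a surjective continuous map with the specification property, and assume f(p) = p for some p ∈ X. Then there exist ε > 0 and a dense Mycielski set D ⊆ X which is distributionally ε-scrambled for f, satisfies f(D) ⊆ D, and satisfies p ∈ D ⊆ (Tran(f) ∩ Rec(f)) ∪ {p}. -/
open Filter Set

noncomputable section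
open scoped Classical

/-- Fraction of times `0 ≤ i < n` at which the orbits of `x` and `y` are `t`-close,
i.e. `Φ⁽ⁿ⁾_{xy}(t)`. -/
def distCount {X : Type*} [MetricSpace X] (f : X → X) (x y : X) (t : ℝ) (n : ℕ) : ℝ :=
  (((Finset.range n).filter fun i => dist (f^[i] x) (f^[i] y) < t).card : ℝ) / n

/-- `Φ_{xy}(t)`, the lower distribution function. -/
def PhiLow {X : Type*} [MetricSpace X] (f : X → X) (x y : X) (t : ℝ) : ℝ :=
  liminf (fun n => distCount f x y t n) atTop

/-- `Φ*_{xy}(t)`, the upper distribution function. -/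
def PhiUp {X : Type*} [MetricSpace X] (f : X → X) (x y : X) (t : ℝ) : ℝ :=
  limsup (fun n => distCount f x y t n) atTop

/-- The ω-limit set of `x`: the set of accumulation points of the forward orbit. -/
def omegaSet {X : Type*} [MetricSpace X] (f : X → X) (x : X) : Set X :=
  {y | ∃ φ : ℕ → ℕ, StrictMono φ ∧ Tendsto (fun n => f^[φ n] x) atTop (nhds y)}

/-- Points with dense forward orbit. -/
def Tran {X : Type*} [MetricSpace X] (f : X → X) : Set X :=
  {x | Dense (Set.range fun n : ℕ => f^[n] x)}

/-- Recurrent points. -/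
def Rec {X : Type*} [MetricSpace X] (f : X → X) : Set X :=
  {x | x ∈ omegaSet f x}

/-- A Cantor set: nonempty, compact, perfect and totally disconnected. -/
def IsCantorSet {X : Type*} [MetricSpace X] (C : Set X) : Prop :=
  C.Nonempty ∧ IsCompact C ∧ Perfect C ∧ IsTotallyDisconnected C

/-- A Mycielski set: a countable union of Cantor sets. -/
def IsMycielski {X : Type*} [MetricSpace X] (M : Set X) : Prop :=
  ∃ C : ℕ → Set X, (∀ k, IsCantorSet (C k)) ∧ M = ⋃ k, C k

/-- `S` is distributionally `ε`-scrambled for `f`. -/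
def DistScrambled {X : Type*} [MetricSpace X] (f : X → X) (S : Set X) (ε : ℝ) : Prop :=
  ∀ x ∈ S, ∀ y ∈ S, x ≠ y →
    (∀ t : ℝ, 0 < t → PhiUp f x y t = 1) ∧ PhiLow f x y ε = 0

/-!
Specification glues orbit segments of arbitrary points. Cut time into eras whose lengths grow
faster than their starting times: closeness during infinitely many eras then forces `Φ* = 1`,
and separation during infinitely many eras forces `Φ = 0`. A Cantor family of points `φ α`,
`α : ℕ → Bool`, is built so that in each era the orbit of `φ α` follows a prescribed target: a
point of a dense sequence (transitivity), the fixed point `p` (closeness), `p` or a point `z` whose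
orbit stays away from `p` according to a bit of `α` (separation of different `α`), `z` itself
(separation from `p`), or a point whose orbit stays away from its own `c`-shift (separation of
`f^[a] (φ α)` from `f^[a + c] (φ α)`). Gluing with precision `δ / 2 ^ e` in era `e` makes `φ`
continuous. Then `D` is `p` together with the images `f^[m] '' range φ`, which are Cantor sets;
`p` lies in the Cantor set made of `p` and a sequence of these images shrinking to `p`.
-/

open Topology Function

def IsDistScrambledPair {X : Type*} [MetricSpace X] (f : X → X) (ε : ℝ) (x y : X) : Prop :=
  (∀ t : ℝ, 0 < t → PhiUp f x y t = 1) ∧ PhiLow f x y ε = 0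

section DistributionFunctions

variable {X : Type*} [MetricSpace X] {f : X → X} {x y : X} {t : ℝ}

lemma distCount_nonneg (n : ℕ) : 0 ≤ distCount f x y t n := by
  unfold distCount; positivity

lemma distCount_le_one (n : ℕ) : distCount f x y t n ≤ 1 := by
  unfold distCount
  refine div_le_one_of_le₀ ?_ n.cast_nonneg
  exact_mod_cast (Finset.card_filter_le _ _).trans (Finset.card_range n).le

lemma distCount_comm (n : ℕ) : distCount f x y t n = distCount f y x t n := by
  simp only [distCount, dist_comm]

lemma phiLow_comm : PhiLow f x y t = PhiLow f y x t := by
  simp only [PhiLow, distCount_comm]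

lemma phiUp_comm : PhiUp f x y t = PhiUp f y x t := by
  simp only [PhiUp, distCount_comm]

lemma phiLow_self (ht : 0 < t) : PhiLow f x x t = 1 := by
  have h : ∀ᶠ n in atTop, distCount f x x t n = 1 := by
    filter_upwards [eventually_ne_atTop 0] with n hn
    simp [distCount, ht, hn]
  rw [PhiLow, liminf_congr h, liminf_const]

lemma distCount_le_of_le_dist {a n : ℕ} (h : ∀ j, a ≤ j → j < n → t ≤ dist (f^[j] x) (f^[j] y)) :
    distCount f x y t n ≤ a / n := by
  have hcard : ((Finset.range n).filter fun i => dist (f^[i] x) (f^[i] y) < t).card ≤ a := by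
    refine (Finset.card_le_card fun i hi => ?_).trans (Finset.card_range a).le
    simp only [Finset.mem_filter, Finset.mem_range] at hi ⊢
    exact lt_of_not_ge fun hai => (h i hai hi.1).not_gt hi.2
  exact div_le_div_of_nonneg_right (by exact_mod_cast hcard) n.cast_nonneg

lemma one_sub_div_le_distCount {a n : ℕ} (hn : 0 < n)
    (h : ∀ j, a ≤ j → j < n → dist (f^[j] x) (f^[j] y) < t) :
    1 - a / n ≤ distCount f x y t n := by
  have hcard : n - a ≤ ((Finset.range n).filter fun i => dist (f^[i] x) (f^[i] y) < t).card := by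
    rw [← Nat.card_Ico]
    refine Finset.card_le_card fun i hi => ?_
    simp only [Finset.mem_Ico, Finset.mem_filter, Finset.mem_range] at hi ⊢
    exact ⟨hi.2, h i hi.1 hi.2⟩
  have hn' : (0 : ℝ) < n := by exact_mod_cast hn
  rw [one_sub_div hn'.ne', distCount]
  gcongr
  have hsub : (n : ℝ) ≤ ((n - a : ℕ) : ℝ) + a := by exact_mod_cast le_tsub_add
  have hcard' : ((n - a : ℕ) : ℝ) ≤ _ := Nat.cast_le.2 hcard
  linarith

lemma phiLow_eq_zero_of_frequently_le (h : ∀ r > 0, ∃ᶠ n in atTop, distCount f x y t n ≤ r) :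
    PhiLow f x y t = 0 := by
  have hbdd : IsBoundedUnder (· ≥ ·) atTop fun n => distCount f x y t n :=
    isBoundedUnder_of ⟨0, distCount_nonneg⟩
  refine le_antisymm (le_of_forall_pos_le_add fun r hr => ?_) ?_
  · have := liminf_le_of_frequently_le (h r hr) hbdd
    rw [PhiLow]
    linarith
  · exact le_liminf_of_le (isBoundedUnder_of ⟨1, distCount_le_one⟩).isCoboundedUnder_ge
      (.of_forall distCount_nonneg)

lemma phiUp_eq_one_of_frequently_ge (h : ∀ r > 0, ∃ᶠ n in atTop, 1 - r ≤ distCount f x y t n) :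
    PhiUp f x y t = 1 := by
  have hbdd : IsBoundedUnder (· ≤ ·) atTop fun n => distCount f x y t n :=
    isBoundedUnder_of ⟨1, distCount_le_one⟩
  refine le_antisymm ?_ (le_of_forall_pos_le_add fun r hr => ?_)
  · exact limsup_le_of_le (isBoundedUnder_of ⟨0, distCount_nonneg⟩).isCoboundedUnder_le
      (.of_forall distCount_le_one)
  · have := le_limsup_of_frequently_le (h r hr) hbdd
    rw [PhiUp]
    linarith

lemma IsDistScrambledPair.symm {ε : ℝ} (h : IsDistScrambledPair f ε x y) :
    IsDistScrambledPair f ε y x :=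
  ⟨fun t ht => phiUp_comm.trans (h.1 t ht), phiLow_comm.trans h.2⟩

lemma IsDistScrambledPair.ne {ε : ℝ} (h : IsDistScrambledPair f ε x y) (hε : 0 < ε) : x ≠ y := by
  rintro rfl
  simpa [phiLow_self hε] using h.2

end DistributionFunctions

section Specification

variable {X : Type*} [MetricSpace X] {f : X → X} {γ : ℝ}

/-- Surjectivity lets the `i`-th window follow the orbit of `v i` from its start on. -/
lemma SpecProp.exists_shadow_finite (hspec : SpecProp f) (hsurj : Surjective f) (hγ : 0 < γ) :
    ∃ N, ∀ (L : ℕ) (a l : ℕ → ℕ) (v : ℕ → X), a 0 = 0 → (∀ i < L, a i + l i + N ≤ a (i + 1)) →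
      ∃ z, ∀ i ≤ L, ∀ j ≤ l i, dist (f^[a i + j] z) (f^[j] (v i)) < γ := by
  obtain ⟨N, -, hN⟩ := hspec γ hγ
  refine ⟨N, fun L a l v ha hgap => ?_⟩
  let y : ℕ → X := fun i => surjInv (hsurj.iterate (a i)) (v i)
  -- a dummy last window: the specification property asks for at least two of them
  let winStart : ℕ → ℕ := fun i => if i ≤ L then a i else a L + l L + N
  let winEnd : ℕ → ℕ := fun i => if i ≤ L then a i + l i else a L + l L + N
  obtain ⟨z, hz⟩ := hN (L + 2) (by omega) (fun m => y m) (fun m => winStart m) (fun m => winEnd m)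
    (by simp [winStart, ha]) (fun m => by simp only [winStart, winEnd]; split_ifs <;> omega)
    (fun m hm => by
      simp only [winStart, winEnd]
      split_ifs with h₁ h₂
      · exact hgap m (by omega)
      · rw [show (m : ℕ) = L by omega]
      · omega
      · omega)
  refine ⟨z, fun i hi j hj => ?_⟩
  have hy : f^[a i + j] (y i) = f^[j] (v i) := by
    rw [add_comm, iterate_add_apply, surjInv_eq (hsurj.iterate (a i))]
  simpa [winStart, winEnd, hi, hj, hy] using hz ⟨i, by omega⟩ (a i + j)

lemma SpecProp.exists_shadow_two (hspec : SpecProp f) (hsurj : Surjective f) (hγ : 0 < γ) :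
    ∃ N, ∀ (x y : X) (b a l : ℕ), b + N ≤ a → ∃ z, (∀ j ≤ b, dist (f^[j] z) (f^[j] x) < γ) ∧
      ∀ j ≤ l, dist (f^[a + j] z) (f^[j] y) < γ := by
  obtain ⟨N, hN⟩ := hspec.exists_shadow_finite hsurj hγ
  refine ⟨N, fun x y b a l hba => ?_⟩
  obtain ⟨z, hz⟩ := hN 1 (fun i => if i = 0 then 0 else a) (fun i => if i = 0 then b else l)
    (fun i => if i = 0 then x else y) rfl fun i hi => by
      obtain rfl : i = 0 := by omega
      simpa using hba
  exact ⟨z, fun j hj => by simpa using hz 0 (by omega) j (by simpa using hj),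
    fun j hj => by simpa using hz 1 le_rfl j (by simpa using hj)⟩

lemma SpecProp.exists_shadow_seq [CompactSpace X] (hf : Continuous f) (hspec : SpecProp f)
    (hsurj : Surjective f) (hγ : 0 < γ) :
    ∃ N, ∀ (a l : ℕ → ℕ) (v : ℕ → X), a 0 = 0 → (∀ i, a i + l i + N ≤ a (i + 1)) →
      ∃ z, ∀ i, ∀ j ≤ l i, dist (f^[a i + j] z) (f^[j] (v i)) ≤ γ := by
  obtain ⟨N, hN⟩ := hspec.exists_shadow_finite hsurj hγ
  refine ⟨N, fun a l v ha hgap => ?_⟩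
  let F : ℕ → Set X := fun L => {z | ∀ i ≤ L, ∀ j ≤ l i, dist (f^[a i + j] z) (f^[j] (v i)) ≤ γ}
  have hF : ∀ L, IsClosed (F L) := fun L => by
    simp only [F, ofPred_forall]
    exact isClosed_iInter fun i => isClosed_iInter fun _ => isClosed_iInter fun j =>
      isClosed_iInter fun _ => isClosed_le ((hf.iterate _).dist continuous_const) continuous_const
  obtain ⟨z, hz⟩ := IsCompact.nonempty_iInter_of_sequence_nonempty_isCompact_isClosed F
    (fun L z hz i hi => hz i (by omega))
    (fun L => (hN L a l v ha fun i _ => hgap i).imp fun z hz i hi j hj => (hz i hi j hj).le)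
    (hF 0).isCompact hF
  exact ⟨z, fun i => mem_iInter.1 hz i i le_rfl⟩

end Specification

section Separation

variable {X : Type*} [MetricSpace X] {f : X → X} {p : X}

lemma dist_iterate_mul_le_sum (y : X) (c m : ℕ) :
    dist y (f^[m * c] y) ≤ ∑ k ∈ Finset.range m, dist (f^[k * c] y) (f^[k * c] (f^[c] y)) := by
  simpa [add_mul, iterate_add_apply] using dist_le_range_sum_dist (fun k => f^[k * c] y) m

variable [CompactSpace X]

lemma exists_dist_iterate_lt (hf : Continuous f) (T : ℕ) {D : ℝ} (hD : 0 < D) :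
    ∃ ζ > 0, ∀ a b : X, dist a b < ζ → ∀ t ≤ T, dist (f^[t] a) (f^[t] b) < D := by
  have hF : UniformContinuous fun x (t : Fin (T + 1)) => f^[t] x :=
    CompactSpace.uniformContinuous_of_continuous (continuous_pi fun t => hf.iterate t)
  obtain ⟨ζ, hζ, h⟩ := Metric.uniformContinuous_iff.1 hF D hD
  exact ⟨ζ, hζ, fun a b hab t ht =>
    (dist_le_pi_dist (fun t : Fin (T + 1) => f^[t] a) _ ⟨t, by omega⟩).trans_lt (h hab)⟩

lemma exists_add_eq_mul_succ (j N : ℕ) : ∃ i s, s ≤ N ∧ s + j = i * (N + 1) := by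
  refine ⟨(j + N) / (N + 1), N - (j + N) % (N + 1), Nat.sub_le _ _, ?_⟩
  have h₁ := Nat.div_add_mod' (j + N) (N + 1)
  have h₂ := Nat.mod_lt (j + N) (show 0 < N + 1 by omega)
  omega

/-- A point whose orbit visits a ball about `q ≠ p` every `N + 1` steps stays away from the fixed
point `p`, since orbits starting near `p` remain near `p` for `N` steps. -/
theorem exists_forall_le_dist_iterate [Nontrivial X] (hf : Continuous f) (hspec : SpecProp f)
    (hsurj : Surjective f) (hp : f p = p) : ∃ z : X, ∃ ζ > 0, ∀ j, ζ ≤ dist p (f^[j] z) := by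
  obtain ⟨q, hq⟩ := exists_ne p
  have hpq : 0 < dist p q := dist_pos.2 hq.symm
  obtain ⟨N, hN⟩ := hspec.exists_shadow_seq hf hsurj (show 0 < dist p q / 4 by positivity)
  obtain ⟨z, hz⟩ := hN (fun i => i * (N + 1)) (fun _ => 0) (fun _ => q) (zero_mul _)
    fun i => by rw [add_mul, one_mul]; omega
  obtain ⟨ζ, hζ, hmod⟩ := exists_dist_iterate_lt hf N (show 0 < dist p q / 4 by positivity)
  refine ⟨z, ζ, hζ, fun j => le_of_not_gt fun hj => ?_⟩
  obtain ⟨i, s, hs, hsj⟩ := exists_add_eq_mul_succ j N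
  have h₁ := hmod p (f^[j] z) hj s hs
  rw [iterate_fixed hp, ← iterate_add_apply, hsj] at h₁
  have h₂ := hz i 0 le_rfl
  rw [add_zero, iterate_zero_apply] at h₂
  linarith [dist_triangle p (f^[i * (N + 1)] z) q]

lemma exists_add_eq_mul_add (j c N : ℕ) (hc : N < c) :
    ∃ i r t, r ≤ c - N - 1 ∧ t ≤ N ∧ j + t = i * c + r := by
  have h₁ := Nat.div_add_mod' j c
  have h₂ := Nat.mod_lt j (show 0 < c by omega)
  rcases le_or_gt (j % c) (c - N - 1) with h | h
  · exact ⟨j / c, j % c, 0, h, Nat.zero_le _, by omega⟩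
  · exact ⟨j / c + 1, 0, c - j % c, le_rfl.trans (Nat.zero_le _), by omega, by rw [add_mul]; omega⟩

/-- For lags `c` beyond the specification gap, shadow blocks of length `c - N` alternately
following `p` and the far orbit of `z`: the blocks at times `n` and `n + c` have opposite
kinds, and every time is within `N` steps of a block. -/
theorem exists_lag_separated_of_lt (hf : Continuous f) (hspec : SpecProp f)
    (hsurj : Surjective f) (hp : f p = p) {z : X} {ζ : ℝ} (hζ : 0 < ζ)
    (hz : ∀ j, ζ ≤ dist p (f^[j] z)) :
    ∃ N, ∃ κ > 0, ∀ c, N < c → ∃ s, ∀ j, κ ≤ dist (f^[j] s) (f^[j + c] s) := by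
  obtain ⟨N, hN⟩ := hspec.exists_shadow_seq hf hsurj (show 0 < ζ / 4 by positivity)
  obtain ⟨κ, hκ, hmod⟩ := exists_dist_iterate_lt hf N (show 0 < ζ / 2 by positivity)
  refine ⟨N, κ, hκ, fun c hc => ?_⟩
  obtain ⟨s, hs⟩ := hN (fun i => i * c) (fun _ => c - N - 1) (fun i => if Even i then p else z)
    (zero_mul c) fun i => by rw [add_mul, one_mul]; omega
  have hblock : ∀ i, ∀ r ≤ c - N - 1, (Even i → dist p (f^[i * c + r] s) ≤ ζ / 4) ∧
      (¬Even i → 3 * ζ / 4 ≤ dist p (f^[i * c + r] s)) := fun i r hr => by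
    have h := hs i r hr
    refine ⟨fun hi => ?_, fun hi => ?_⟩
    · rwa [if_pos hi, iterate_fixed hp, dist_comm] at h
    · rw [if_neg hi] at h
      linarith [hz r, dist_triangle p (f^[i * c + r] s) (f^[r] z)]
  have hsep : ∀ i, ∀ r ≤ c - N - 1, ζ / 2 ≤ dist (f^[i * c + r] s) (f^[i * c + r + c] s) := by
    intro i r hr
    have hnext := hblock (i + 1) r hr
    rw [add_mul, one_mul, add_right_comm, Nat.even_add_one] at hnext
    have hcur := hblock i r hr
    by_cases hi : Even i
    · linarith [hcur.1 hi, hnext.2 (not_not.2 hi),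
        dist_triangle p (f^[i * c + r] s) (f^[i * c + r + c] s)]
    · linarith [hcur.2 hi, hnext.1 hi, dist_triangle p (f^[i * c + r + c] s) (f^[i * c + r] s),
        dist_comm (f^[i * c + r] s) (f^[i * c + r + c] s)]
  refine ⟨s, fun j => le_of_not_gt fun hj => ?_⟩
  obtain ⟨i, r, t, hr, ht, hjt⟩ := exists_add_eq_mul_add j c N hc
  have h := hmod _ _ hj t ht
  rw [← iterate_add_apply, ← iterate_add_apply, show t + j = i * c + r by omega,
    show t + (j + c) = i * c + r + c by omega] at h
  linarith [hsep i r hr]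

/-- If `f^[c]` moved a point very little, then so would `f^[c'] = (f^[c])^[c' / c]`. -/
lemma exists_le_dist_iterate_of_dvd (hf : Continuous f) {c' : ℕ} (hc' : 0 < c') {s : X} {κ : ℝ}
    (hκ : 0 < κ) (hs : ∀ j, κ ≤ dist (f^[j] s) (f^[j + c'] s)) :
    ∃ η > 0, ∀ c, 0 < c → c ∣ c' → ∀ j, η ≤ dist (f^[j] s) (f^[j + c] s) := by
  have hc'pos : (0 : ℝ) < c' := by exact_mod_cast hc'
  obtain ⟨η, hη, hmod⟩ := exists_dist_iterate_lt hf c' (div_pos hκ hc'pos)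
  refine ⟨η, hη, fun c hc ⟨m, hm⟩ j => le_of_not_gt fun hj => ?_⟩
  set y := f^[j] s
  have hstep : ∀ k ∈ Finset.range m, dist (f^[k * c] y) (f^[k * c] (f^[c] y)) < κ / c' := by
    intro k hk
    refine hmod _ _ (lt_of_le_of_lt ?_ hj) _ ?_
    · rw [← iterate_add_apply, add_comm]
    · rw [hm, mul_comm c]
      exact Nat.mul_le_mul_right c (Finset.mem_range.1 hk).le
  have hm0 : 0 < m := Nat.pos_of_ne_zero fun h0 => by simp [h0] at hm; omega
  have hsum : dist y (f^[m * c] y) < m * (κ / c') :=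
    calc dist y (f^[m * c] y) ≤ _ := dist_iterate_mul_le_sum y c m
      _ < ∑ k ∈ Finset.range m, κ / c' :=
        Finset.sum_lt_sum_of_nonempty (Finset.nonempty_range_iff.2 hm0.ne') hstep
      _ = m * (κ / c') := by simp
  have hmκ : (m : ℝ) * (κ / c') ≤ κ := by
    have hmc : (m : ℝ) ≤ c' := by exact_mod_cast hm ▸ Nat.le_mul_of_pos_left m hc
    rw [mul_div_assoc', div_le_iff₀ hc'pos]
    exact mul_le_mul_of_nonneg_right hmc hκ.le |>.trans_eq (mul_comm _ _)
  have hlag : κ ≤ dist y (f^[m * c] y) := by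
    rw [← iterate_add_apply, add_comm, mul_comm, ← hm]
    exact hs j
  linarith

/-- Small lags divide the large lag `(N + 1)!`. -/
theorem exists_lag_separated [Nontrivial X] (hf : Continuous f) (hspec : SpecProp f)
    (hsurj : Surjective f) (hp : f p = p) :
    ∃ κ > 0, ∃ seed : ℕ → X, ∀ c, 0 < c → ∀ j, κ ≤ dist (f^[j] (seed c)) (f^[j + c] (seed c)) := by
  obtain ⟨z, ζ, hζ, hz⟩ := exists_forall_le_dist_iterate hf hspec hsurj hp
  obtain ⟨N, κ, hκ, hlarge⟩ := exists_lag_separated_of_lt hf hspec hsurj hp hζ hz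
  choose! s hs using hlarge
  have hN : N < (N + 1).factorial := (Nat.lt_succ_self N).trans_le (Nat.self_le_factorial _)
  obtain ⟨η, hη, hsmall⟩ := exists_le_dist_iterate_of_dvd hf (by omega) hκ (hs _ hN)
  refine ⟨min κ η, lt_min hκ hη, fun c => if N < c then s c else s (N + 1).factorial,
    fun c hc j => ?_⟩
  dsimp only
  split_ifs with h
  · exact (min_le_left _ _).trans (hs c h j)
  · exact (min_le_right _ _).trans (hsmall c hc (Nat.dvd_factorial hc (by omega)) j)

end Separation

section Eras

variable {X : Type*} [MetricSpace X] {f : X → X} {A : ℕ → ℕ} {δ t : ℝ} {x y p : X}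
  {v w : ℕ → X}

/-- Era `e` consists of the times `A e + j` with `j ≤ e * A e`. -/
def ShadowsOnEras (f : X → X) (A : ℕ → ℕ) (δ : ℝ) (x : X) (v : ℕ → X) : Prop :=
  ∀ e j, j ≤ e * A e → dist (f^[A e + j] x) (f^[j] (v e)) ≤ δ / 2 ^ e

lemma tendsto_mul_atTop_of_le (hA : ∀ e, e ≤ A e) : Tendsto (fun e => e * A e) atTop atTop :=
  tendsto_atTop_mono (fun e => (Nat.le_mul_self e).trans (Nat.mul_le_mul_left e (hA e)))
    tendsto_id

lemma eventually_one_div_lt_and_le {r : ℝ} (hr : 0 < r) (M : ℕ) :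
    ∀ᶠ e : ℕ in atTop, (1 : ℝ) / e < r ∧ M + 1 ≤ e :=
  (tendsto_one_div_atTop_nhds_zero_nat.eventually (gt_mem_nhds hr)).and (eventually_ge_atTop _)

lemma div_mul_self_eq_one_div {e a : ℕ} (ha : 0 < a) : (a : ℝ) / (e * a : ℕ) = 1 / e := by
  have : (a : ℝ) ≠ 0 := by positivity
  push_cast
  field_simp

/-- The eras are long compared with their starting times, so being far apart during infinitely
many of them forces the lower distribution function to vanish. -/
lemma phiLow_eq_zero_of_frequently_far (hA : ∀ e, e ≤ A e) (M : ℕ)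
    (h : ∃ᶠ e in atTop, ∀ i, i + M ≤ e * A e → t ≤ dist (f^[A e + i] x) (f^[A e + i] y)) :
    PhiLow f x y t = 0 := by
  refine phiLow_eq_zero_of_frequently_le fun r hr => (tendsto_mul_atTop_of_le hA).frequently
    ((h.and_eventually (eventually_one_div_lt_and_le hr M)).mono fun e ⟨hfar, hr, he⟩ => ?_)
  have hAe := hA e
  calc distCount f x y t (e * A e) ≤ A e / (e * A e : ℕ) :=
        distCount_le_of_le_dist fun j hj hjn => by
          obtain ⟨i, rfl⟩ := Nat.exists_eq_add_of_le hj
          exact hfar i (by omega)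
    _ = 1 / e := div_mul_self_eq_one_div (by omega)
    _ ≤ r := hr.le

lemma phiUp_eq_one_of_frequently_close (hA : ∀ e, e ≤ A e) (M : ℕ)
    (h : ∃ᶠ e in atTop, ∀ i, i + M ≤ e * A e → dist (f^[A e + i] x) (f^[A e + i] y) < t) :
    PhiUp f x y t = 1 := by
  refine phiUp_eq_one_of_frequently_ge fun r hr => (tendsto_mul_atTop_of_le hA).frequently
    ((h.and_eventually (eventually_one_div_lt_and_le hr M)).mono fun e ⟨hclose, hr, he⟩ => ?_)
  have hAe := hA e
  calc 1 - r ≤ 1 - A e / (e * A e : ℕ) := by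
        rw [div_mul_self_eq_one_div (by omega)]
        linarith
    _ ≤ distCount f x y t (e * A e) :=
        one_sub_div_le_distCount (Nat.mul_pos (by omega) (by omega)) fun j hj hjn => by
          obtain ⟨i, rfl⟩ := Nat.exists_eq_add_of_le hj
          exact hclose i (by omega)

lemma eventually_div_two_pow_lt (δ : ℝ) {r : ℝ} (hr : 0 < r) :
    ∀ᶠ e : ℕ in atTop, δ / 2 ^ e < r :=
  (tendsto_const_nhds.div_atTop (tendsto_pow_atTop_atTop_of_one_lt one_lt_two)).eventually
    (gt_mem_nhds hr)

lemma div_two_pow_le (hδ : 0 ≤ δ) (e : ℕ) : δ / 2 ^ e ≤ δ :=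
  div_le_self hδ (one_le_pow₀ one_le_two)

lemma ShadowsOnEras.dist_iterate_le (h : ShadowsOnEras f A δ x v) {e i a : ℕ}
    (hi : i + a ≤ e * A e) : dist (f^[A e + i] (f^[a] x)) (f^[i + a] (v e)) ≤ δ / 2 ^ e := by
  rw [← iterate_add_apply, add_assoc]
  exact h e _ hi

lemma shadowsOnEras_of_isFixedPt (hp : f p = p) (hδ : 0 ≤ δ) :
    ShadowsOnEras f A δ p fun _ => p := fun e j _ => by
  simpa [iterate_fixed hp] using div_nonneg hδ (by positivity)

lemma phiUp_iterate_eq_one (hA : ∀ e, e ≤ A e) (hp : f p = p) (hx : ShadowsOnEras f A δ x v)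
    (hy : ShadowsOnEras f A δ y w) (hrest : ∃ᶠ e in atTop, v e = p ∧ w e = p) (a b : ℕ)
    (ht : 0 < t) : PhiUp f (f^[a] x) (f^[b] y) t = 1 := by
  refine phiUp_eq_one_of_frequently_close hA (a + b)
    ((hrest.and_eventually (eventually_div_two_pow_lt δ (half_pos ht))).mono ?_)
  rintro e ⟨⟨hv, hw⟩, he⟩ i hi
  have hx' := hx.dist_iterate_le (e := e) (i := i) (a := a) (by omega)
  have hy' := hy.dist_iterate_le (e := e) (i := i) (a := b) (by omega)
  rw [hv, iterate_fixed hp] at hx'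
  rw [hw, iterate_fixed hp] at hy'
  linarith [dist_triangle_right (f^[A e + i] (f^[a] x)) (f^[A e + i] (f^[b] y)) p]

lemma phiLow_iterate_eq_zero_of_far (hA : ∀ e, e ≤ A e) (hp : f p = p) (hδ : 0 ≤ δ) {z : X}
    (hz : ∀ j, t + 2 * δ ≤ dist p (f^[j] z)) (hx : ShadowsOnEras f A δ x v)
    (hy : ShadowsOnEras f A δ y w) (hfar : ∃ᶠ e in atTop, v e = p ∧ w e = z) (a b : ℕ) :
    PhiLow f (f^[a] x) (f^[b] y) t = 0 := by
  refine phiLow_eq_zero_of_frequently_far hA (a + b) (hfar.mono ?_)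
  rintro e ⟨hv, hw⟩ i hi
  have hx' := hx.dist_iterate_le (e := e) (i := i) (a := a) (by omega)
  have hy' := hy.dist_iterate_le (e := e) (i := i) (a := b) (by omega)
  rw [hv, iterate_fixed hp, dist_comm] at hx'
  rw [hw] at hy'
  linarith [dist_triangle4 p (f^[A e + i] (f^[a] x)) (f^[A e + i] (f^[b] y)) (f^[i + b] z),
    hz (i + b), div_two_pow_le hδ e]

lemma phiLow_iterate_eq_zero_of_lag (hA : ∀ e, e ≤ A e) (hδ : 0 ≤ δ) {s : X} {c : ℕ}
    (hs : ∀ j, t + 2 * δ ≤ dist (f^[j] s) (f^[j + c] s)) (hx : ShadowsOnEras f A δ x v)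
    (hlag : ∃ᶠ e in atTop, v e = s) (a : ℕ) : PhiLow f (f^[a] x) (f^[a + c] x) t = 0 := by
  refine phiLow_eq_zero_of_frequently_far hA (a + c) (hlag.mono ?_)
  rintro e hv i hi
  have h₁ := hx.dist_iterate_le (e := e) (i := i) (a := a) (by omega)
  have h₂ := hx.dist_iterate_le (e := e) (i := i) (a := a + c) (by omega)
  rw [hv, dist_comm] at h₁
  rw [hv, ← add_assoc] at h₂
  linarith [dist_triangle4 (f^[i + a] s) (f^[A e + i] (f^[a] x)) (f^[A e + i] (f^[a + c] x))
    (f^[i + a + c] s), hs (i + a), div_two_pow_le hδ e]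

end Eras

/-- Era `e` runs from `eraStart N e` to `(e + 1) * eraStart N e`, and is followed by a gap longer
than `N e`. -/
def eraStart (N : ℕ → ℕ) : ℕ → ℕ
  | 0 => 0
  | e + 1 => (e + 1) * eraStart N e + N e + 1

lemma eraStart_strictMono (N : ℕ → ℕ) : StrictMono (eraStart N) :=
  strictMono_nat_of_lt_succ fun e => by
    have := Nat.le_mul_of_pos_left (eraStart N e) (show 0 < e + 1 by omega)
    simp only [eraStart]
    omega

section Shadowing

variable {X : Type*} [MetricSpace X] {f : X → X}

lemma exists_dist_iterate_le_of_geometric [CompleteSpace X] (hf : Continuous f) {c : ℕ → X}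
    {T : ℕ → ℕ} (hT : Monotone T) {C : ℝ}
    (hc : ∀ e, ∀ j ≤ T e, dist (f^[j] (c e)) (f^[j] (c (e + 1))) ≤ C / 2 / 2 ^ e) :
    ∃ x, ∀ e, ∀ j ≤ T e, dist (f^[j] (c e)) (f^[j] x) ≤ C / 2 ^ e := by
  obtain ⟨x, hx⟩ := cauchySeq_tendsto_of_complete
    (cauchySeq_of_le_geometric_two (C := C) fun e => by simpa using hc e 0 (Nat.zero_le _))
  refine ⟨x, fun e j hj => ?_⟩
  simpa using dist_le_of_le_geometric_two_of_tendsto₀ (C := C / 2 ^ e)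
    (f := fun k => f^[j] (c (k + e)))
    (fun k => by
      rw [add_right_comm]
      exact (hc (k + e) j (hj.trans (hT (by omega)))).trans_eq (by rw [pow_add]; ring))
    (((hf.iterate j).tendsto x).comp (hx.comp (tendsto_add_atTop_nat e)))

/-- The shadowing point is the limit of points `c v e` gluing `c v (e - 1)` to the target of era
`e`; as `c v e` only depends on `v 0, …, v e`, the limit depends continuously on the targets. -/
theorem SpecProp.exists_shadowsOnEras [CompactSpace X] (hf : Continuous f) (hspec : SpecProp f)
    (hsurj : Surjective f) {δ : ℝ} (hδ : 0 < δ) :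
    ∃ A : ℕ → ℕ, (∀ e, e ≤ A e) ∧ ∃ Φ : (ℕ → X) → X, (∀ v, ShadowsOnEras f A δ (Φ v) v) ∧
      ∀ v v' E, (∀ e ≤ E, v e = v' e) → dist (Φ v) (Φ v') ≤ δ / 2 ^ E := by
  choose N hN using fun e : ℕ =>
    hspec.exists_shadow_two hsurj (show 0 < δ / 4 / 2 ^ e by positivity)
  set A := eraStart N
  have hA : StrictMono A := eraStart_strictMono N
  choose G hG using fun (x y : X) (e : ℕ) =>
    hN e x y ((e + 1) * A e) (A (e + 1)) ((e + 1) * A (e + 1)) (Nat.le_succ _)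
  let c : (ℕ → X) → ℕ → X := fun v e => Nat.rec (v 0) (fun e x => G x (v (e + 1)) e) e
  have hT : Monotone fun e => (e + 1) * A e :=
    fun e e' h => Nat.mul_le_mul (by omega) (hA.monotone h)
  choose Φ hΦ using fun v => exists_dist_iterate_le_of_geometric hf hT (C := δ / 2) (c := c v)
    fun e j hj => by
      rw [dist_comm]
      exact ((hG _ _ e).1 j hj).le.trans_eq (by ring)
  have hfollow : ∀ v e, ∀ j ≤ e * A e,
      dist (f^[A e + j] (c v e)) (f^[j] (v e)) ≤ δ / 2 / 2 ^ e := by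
    rintro v (_ | e) j hj
    · obtain rfl : j = 0 := by simpa using hj
      simp [c, A, eraStart]
      positivity
    · exact ((hG _ _ e).2 j hj).le.trans_eq (by rw [pow_succ]; ring)
  refine ⟨A, hA.id_le, Φ, fun v e j hj => ?_, fun v v' E h => ?_⟩
  · calc dist (f^[A e + j] (Φ v)) (f^[j] (v e))
        ≤ dist (f^[A e + j] (c v e)) (f^[A e + j] (Φ v)) +
          dist (f^[A e + j] (c v e)) (f^[j] (v e)) := dist_triangle_left _ _ _
      _ ≤ δ / 2 / 2 ^ e + δ / 2 / 2 ^ e :=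
        add_le_add (hΦ v e _ (by rw [add_mul, one_mul]; omega)) (hfollow v e j hj)
      _ = δ / 2 ^ e := by ring
  · have hc : c v E = c v' E := by
      induction E with
      | zero => exact h 0 le_rfl
      | succ E ih =>
        change G (c v E) (v (E + 1)) E = G (c v' E) (v' (E + 1)) E
        rw [ih fun e he => h e (by omega), h (E + 1) le_rfl]
    calc dist (Φ v) (Φ v') ≤ dist (c v E) (Φ v) + dist (c v' E) (Φ v') := by
          rw [hc]; exact dist_triangle_left _ _ _
      _ ≤ δ / 2 / 2 ^ E + δ / 2 / 2 ^ E :=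
        add_le_add (by simpa using hΦ v E 0 (Nat.zero_le _))
          (by simpa using hΦ v' E 0 (Nat.zero_le _))
      _ = δ / 2 ^ E := by ring

end Shadowing

def eraKind (e : ℕ) : ℕ := e.unpair.2 % 5

def eraParam (e : ℕ) : ℕ := e.unpair.1

lemma eraParam_le (e : ℕ) : eraParam e ≤ e := Nat.unpair_left_le e

lemma frequently_eraKind_eraParam {k : ℕ} (hk : k < 5) (u : ℕ) :
    ∃ᶠ e in atTop, eraKind e = k ∧ eraParam e = u :=
  frequently_atTop.2 fun m => ⟨Nat.pair u (5 * m + k),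
    (show m ≤ 5 * m + k by omega).trans (Nat.right_le_pair _ _),
    by simp [eraKind, Nat.mod_eq_of_lt hk], by simp [eraParam]⟩

/-- Eras of kind `0` visit the dense sequence `w`, those of kind `1` rest at `p`, those of kind `2`
separate points with different bits, those of kind `3` separate them from `p`, and those of kind
`4` separate them from their own iterates. -/
def eraTarget {X : Type*} (w : ℕ → X) (p z : X) (seed : ℕ → X) (α : ℕ → Bool) (e : ℕ) : X :=
  match eraKind e with
  | 0 => w (eraParam e)
  | 1 => p
  | 2 => if α (eraParam e) then z else p
  | 3 => z
  | _ => seed (eraParam e + 1)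

section Construction

variable {X : Type*} {w : ℕ → X} {p z : X} {seed : ℕ → X}

lemma eraTarget_congr {α β : ℕ → Bool} {e : ℕ} (h : α (eraParam e) = β (eraParam e)) :
    eraTarget w p z seed α e = eraTarget w p z seed β e := by
  simp only [eraTarget, h]

lemma frequently_eraTarget_eq_fixed (α β : ℕ → Bool) :
    ∃ᶠ e in atTop, eraTarget w p z seed α e = p ∧ eraTarget w p z seed β e = p :=
  (frequently_eraKind_eraParam (k := 1) (by norm_num) 0).mono fun e ⟨hk, _⟩ => by
    simp [eraTarget, hk]

variable [MetricSpace X] {f : X → X} {A : ℕ → ℕ} {δ : ℝ} {φ : (ℕ → Bool) → X}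

lemma continuous_eraTarget {Φ : (ℕ → X) → X}
    (hΦ : ∀ v v' E, (∀ e ≤ E, v e = v' e) → dist (Φ v) (Φ v') ≤ δ / 2 ^ E) :
    Continuous fun α => Φ (eraTarget w p z seed α) := by
  refine Metric.continuous_iff'.2 fun α r hr => ?_
  obtain ⟨E, hE⟩ := (eventually_div_two_pow_lt δ hr).exists
  filter_upwards [(PiNat.isOpen_cylinder _ α (E + 1)).mem_nhds (PiNat.self_mem_cylinder α (E + 1))]
    with β hβ
  refine (hΦ _ _ E fun e he => eraTarget_congr ?_).trans_lt hE
  exact PiNat.mem_cylinder_iff.1 hβ _ (by linarith [eraParam_le e])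

lemma mapClusterPt_of_eraTarget (hA : ∀ e, e ≤ A e)
    (hφ : ∀ α, ShadowsOnEras f A δ (φ α) (eraTarget w p z seed α)) (hw : DenseRange w)
    (α : ℕ → Bool) (y : X) :
    MapClusterPt y atTop fun n => f^[n] (φ α) := by
  refine mapClusterPt_iff_frequently.2 fun s hs => ?_
  obtain ⟨r, hr, hball⟩ := Metric.mem_nhds_iff.1 hs
  obtain ⟨u, hu⟩ := hw.exists_dist_lt y (half_pos hr)
  refine (tendsto_atTop_mono hA tendsto_id).frequently
    (((frequently_eraKind_eraParam (k := 0) (by norm_num) u).and_eventually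
      (eventually_div_two_pow_lt δ (half_pos hr))).mono fun e ⟨⟨hk, hu'⟩, he⟩ => hball ?_)
  have h := hφ α e 0 (Nat.zero_le _)
  simp only [add_zero, iterate_zero_apply, eraTarget, hk, hu'] at h
  rw [Metric.mem_ball]
  linarith [dist_triangle_right (f^[A e] (φ α)) y (w u)]

lemma exists_forall_dist_iterate_le_of_eraTarget
    (hφ : ∀ α, ShadowsOnEras f A δ (φ α) (eraTarget w p z seed α)) {r : ℝ} (hr : 0 < r) :
    ∃ n, ∀ α, dist (f^[n] (φ α)) p ≤ r := by
  obtain ⟨e, ⟨hk, -⟩, he⟩ := ((frequently_eraKind_eraParam (k := 1) (by norm_num) 0).and_eventually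
    (eventually_div_two_pow_lt δ hr)).exists
  refine ⟨A e, fun α => ?_⟩
  have h := hφ α e 0 (Nat.zero_le _)
  simp only [add_zero, iterate_zero_apply, eraTarget, hk] at h
  exact h.trans he.le

lemma isDistScrambledPair_of_eraTarget (hA : ∀ e, e ≤ A e)
    (hφ : ∀ α, ShadowsOnEras f A δ (φ α) (eraTarget w p z seed α)) (hp : f p = p) (hδ : 0 < δ)
    (hz : ∀ j, 3 * δ ≤ dist p (f^[j] z))
    (hseed : ∀ c, 0 < c → ∀ j, 3 * δ ≤ dist (f^[j] (seed c)) (f^[j + c] (seed c)))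
    {α β : ℕ → Bool} {a b : ℕ} (hne : (α, a) ≠ (β, b)) :
    IsDistScrambledPair f δ (f^[a] (φ α)) (f^[b] (φ β)) := by
  refine ⟨fun t ht => phiUp_iterate_eq_one hA hp (hφ α) (hφ β)
    (frequently_eraTarget_eq_fixed α β) a b ht, ?_⟩
  rcases eq_or_ne α β with rfl | hαβ
  · have hlag : ∀ a c, 0 < c → PhiLow f (f^[a] (φ α)) (f^[a + c] (φ α)) δ = 0 :=
      fun a c hc => phiLow_iterate_eq_zero_of_lag hA hδ.le (fun j => by linarith [hseed c hc j])
        (hφ α) ((frequently_eraKind_eraParam (k := 4) (by norm_num) (c - 1)).mono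
          fun e ⟨hk, hu⟩ => by simp [eraTarget, hk, hu, Nat.sub_add_cancel hc]) a
    rcases lt_or_gt_of_ne fun h : a = b => hne (by rw [h]) with h | h
    · simpa [Nat.add_sub_cancel' h.le] using hlag a (b - a) (by omega)
    · rw [phiLow_comm]
      simpa [Nat.add_sub_cancel' h.le] using hlag b (a - b) (by omega)
  · obtain ⟨i, hi⟩ := Function.ne_iff.1 hαβ
    have hbit : ∀ α β : ℕ → Bool, α i = false → β i = true → ∀ a b,
        PhiLow f (f^[a] (φ α)) (f^[b] (φ β)) δ = 0 := fun α β hα hβ a b =>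
      phiLow_iterate_eq_zero_of_far hA hp hδ.le (fun j => by linarith [hz j]) (hφ α) (hφ β)
        ((frequently_eraKind_eraParam (k := 2) (by norm_num) i).mono fun e ⟨hk, hu⟩ => by
          simp [eraTarget, hk, hu, hα, hβ]) a b
    cases hα : α i <;> cases hβ : β i <;> simp only [hα, hβ, ne_eq, not_true_eq_false] at hi
    · exact hbit α β hα hβ a b
    · exact phiLow_comm.trans (hbit β α hβ hα b a)

lemma isDistScrambledPair_fixed_of_eraTarget (hA : ∀ e, e ≤ A e)
    (hφ : ∀ α, ShadowsOnEras f A δ (φ α) (eraTarget w p z seed α)) (hp : f p = p) (hδ : 0 < δ)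
    (hz : ∀ j, 3 * δ ≤ dist p (f^[j] z)) (α : ℕ → Bool) (b : ℕ) :
    IsDistScrambledPair f δ p (f^[b] (φ α)) := by
  have hpp := shadowsOnEras_of_isFixedPt (A := A) hp hδ.le
  refine ⟨fun t ht => ?_, ?_⟩
  · simpa using phiUp_iterate_eq_one hA hp hpp (hφ α)
      ((frequently_eraTarget_eq_fixed (w := w) (z := z) (seed := seed) α α).mono
        fun e h => ⟨rfl, h.2⟩) 0 b ht
  · simpa using phiLow_iterate_eq_zero_of_far hA hp hδ.le (fun j => by linarith [hz j]) hpp (hφ α)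
      ((frequently_eraKind_eraParam (k := 3) (by norm_num) 0).mono fun e ⟨hk, _⟩ => by
        simp [eraTarget, hk]) 0 b

end Construction

section CantorSets

open Metric

variable {X : Type*} [MetricSpace X]

theorem isCantorSet_range {φ : (ℕ → Bool) → X} (hφ : Continuous φ) (hinj : Injective φ) :
    IsCantorSet (range φ) := by
  refine ⟨range_nonempty φ, isCompact_range hφ, ⟨(isCompact_range hφ).isClosed, ?_⟩,
    (hφ.isClosedEmbedding hinj).isEmbedding.isTotallyDisconnected_range.2 inferInstance⟩
  rintro _ ⟨α, rfl⟩
  let β : ℕ → ℕ → Bool := fun n => update α n !(α n)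
  have hβ : Tendsto β atTop (𝓝 α) := tendsto_pi_nhds.2 fun i =>
    tendsto_const_nhds.congr' ((eventually_gt_atTop i).mono fun n hn => by
      simp [β, update_of_ne hn.ne])
  refine accPt_iff_frequently.2 (((hφ.tendsto α).comp hβ).frequently
    (.of_forall fun n => ⟨hinj.ne fun h => ?_, mem_range_self _⟩))
  simpa [β] using congrFun h n

variable {p : X} {K : ℕ → Set X} {r : ℕ → ℝ}

lemma infDist_anti_of_gap (hK : ∀ j, (K j).Nonempty) (hball : ∀ j, K j ⊆ closedBall p (r j))
    (hgap : ∀ j, r (j + 1) < infDist p (K j)) : Antitone fun j => infDist p (K j) :=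
  antitone_nat_of_succ_le fun j => by
    obtain ⟨y, hy⟩ := hK (j + 1)
    linarith [infDist_le_dist_of_mem (x := p) hy, mem_closedBall'.1 (hball (j + 1) hy), hgap j]

lemma isClosed_insert_iUnion (hK : ∀ j, IsClosed (K j)) (hr : Antitone r)
    (hr0 : Tendsto r atTop (𝓝 0)) (hball : ∀ j, K j ⊆ closedBall p (r j)) :
    IsClosed (insert p (⋃ j, K j)) := by
  have : insert p (⋃ j, K j) = ⋂ J, insert p (⋃ j < J, K j) ∪ closedBall p (r J) := by
    refine Subset.antisymm (subset_iInter fun J => ?_) fun x hx => ?_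
    · rintro x (rfl | ⟨_, ⟨j, rfl⟩, hx⟩)
      · exact Or.inl (mem_insert _ _)
      rcases lt_or_ge j J with h | h
      · exact Or.inl (mem_insert_of_mem _ (mem_biUnion h hx))
      · exact Or.inr (closedBall_subset_closedBall (hr h) (hball j hx))
    rcases eq_or_ne x p with rfl | hxp
    · exact mem_insert _ _
    obtain ⟨J, hJ⟩ := (hr0.eventually (gt_mem_nhds (dist_pos.2 hxp))).exists
    rcases mem_iInter.1 hx J with (rfl | hx') | hx'
    · exact mem_insert _ _
    · obtain ⟨j, -, hj⟩ := mem_iUnion₂.1 hx'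
      exact mem_insert_of_mem _ (mem_iUnion_of_mem j hj)
    · exact absurd (mem_closedBall.1 hx') (not_le.2 hJ)
  rw [this]
  refine isClosed_iInter fun J => ?_
  rw [insert_eq]
  exact (isClosed_singleton.union ((finite_lt_nat J).isClosed_biUnion fun j _ => hK j)).union
    isClosed_closedBall

lemma preperfect_insert_iUnion (hK : ∀ j, IsCantorSet (K j)) (hp : ∀ j, p ∉ K j)
    (hr0 : Tendsto r atTop (𝓝 0)) (hball : ∀ j, K j ⊆ closedBall p (r j)) :
    Preperfect (insert p (⋃ j, K j)) := by
  rintro x (rfl | ⟨_, ⟨j, rfl⟩, hx⟩)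
  · refine accPt_iff_nhds.2 fun U hU => ?_
    obtain ⟨ε, hε, hεU⟩ := Metric.mem_nhds_iff.1 hU
    obtain ⟨J, hJ⟩ := (hr0.eventually (gt_mem_nhds hε)).exists
    obtain ⟨y, hy⟩ := (hK J).1
    exact ⟨y, ⟨hεU (mem_ball.2 ((mem_closedBall.1 (hball J hy)).trans_lt hJ)),
      mem_insert_of_mem _ (mem_iUnion_of_mem J hy)⟩, fun h => hp J (h ▸ hy)⟩
  · exact ((hK j).2.2.1.acc x hx).mono
      (principal_mono.2 ((subset_iUnion K j).trans (subset_insert _ _)))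

/-- A sphere about `p` with radius between `r (i + 1)` and `infDist p (K i)` separates `K i` from
`p` and the later shells, so a preconnected set meeting `K i` stays outside it. -/
lemma ne_and_le_of_isPreconnected (hK : ∀ j, (K j).Nonempty) (hr : Antitone r)
    (hball : ∀ j, K j ⊆ closedBall p (r j)) (hgap : ∀ j, r (j + 1) < infDist p (K j))
    {t : Set X} (hts : t ⊆ insert p (⋃ j, K j)) (ht : IsPreconnected t) {i : ℕ} {y : X}
    (hy : y ∈ t ∩ K i) {x : X} (hx : x ∈ t) : x ≠ p ∧ ∀ j, x ∈ K j → j ≤ i := by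
  obtain ⟨m, hm₁, hm₂⟩ := exists_between (hgap i)
  have hρ := infDist_anti_of_gap hK hball hgap
  have hr₀ : 0 ≤ r (i + 1) := by
    obtain ⟨z, hz⟩ := hK (i + 1)
    exact dist_nonneg.trans (mem_closedBall.1 (hball _ hz))
  have hsub : t ⊆ (closedBall p m)ᶜ := by
    refine ht.subset_left_of_subset_union isClosed_closedBall.isOpen_compl isOpen_ball
      (disjoint_compl_left.mono_right ball_subset_closedBall) (fun z hz => ?_)
      ⟨y, hy.1, fun h => (hm₂.trans_le (infDist_le_dist_of_mem hy.2)).not_ge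
        (by rwa [mem_closedBall, dist_comm] at h)⟩
    rcases hts hz with rfl | ⟨_, ⟨k, rfl⟩, hzk⟩
    · exact Or.inr (mem_ball_self (hr₀.trans_lt hm₁))
    rcases le_or_gt k i with h | h
    · refine Or.inl fun hz' => ?_
      have := (hρ h).trans (infDist_le_dist_of_mem hzk)
      rw [mem_closedBall, dist_comm] at hz'
      linarith
    · exact Or.inr (mem_ball.2 ((mem_closedBall.1 (hball k hzk)).trans_lt ((hr h).trans_lt hm₁)))
  refine ⟨fun h => hsub hx (h ▸ mem_closedBall_self (hr₀.trans hm₁.le)),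
    fun j hj => le_of_not_gt fun hij => hsub hx ?_⟩
  exact closedBall_subset_closedBall ((hr hij).trans hm₁.le) (hball j hj)

lemma isTotallyDisconnected_insert_iUnion (hK : ∀ j, IsCantorSet (K j)) (hr : Antitone r)
    (hball : ∀ j, K j ⊆ closedBall p (r j)) (hgap : ∀ j, r (j + 1) < infDist p (K j)) :
    IsTotallyDisconnected (insert p (⋃ j, K j)) := by
  intro t hts ht
  have hne := fun j => (hK j).1
  by_cases h : ∃ i y, y ∈ t ∩ K i
  · obtain ⟨i, y, hy⟩ := h
    refine (hK i).2.2.2 t (fun x hx => ?_) ht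
    obtain ⟨hxp, hle⟩ := ne_and_le_of_isPreconnected hne hr hball hgap hts ht hy hx
    obtain ⟨j, hj⟩ : ∃ j, x ∈ K j := by simpa [hxp] using hts hx
    obtain rfl := (hle j hj).antisymm
      ((ne_and_le_of_isPreconnected hne hr hball hgap hts ht ⟨hx, hj⟩ hy.1).2 i hy.2)
    exact hj
  · simp only [not_exists] at h
    refine (subsingleton_singleton (a := p)).anti fun x hx => ?_
    rcases hts hx with h' | ⟨_, ⟨j, rfl⟩, hj⟩
    · exact h'
    · exact absurd ⟨hx, hj⟩ (h j x)

theorem isCantorSet_insert_iUnion [ProperSpace X] (hK : ∀ j, IsCantorSet (K j))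
    (hr : Antitone r) (hr0 : Tendsto r atTop (𝓝 0)) (hball : ∀ j, K j ⊆ closedBall p (r j))
    (hgap : ∀ j, r (j + 1) < infDist p (K j)) : IsCantorSet (insert p (⋃ j, K j)) := by
  have hp : ∀ j, p ∉ K j := fun j hpK => by
    obtain ⟨y, hy⟩ := (hK (j + 1)).1
    have := hgap j
    rw [infDist_zero_of_mem hpK] at this
    linarith [dist_nonneg.trans (mem_closedBall.1 (hball _ hy))]
  have hclosed := isClosed_insert_iUnion (fun j => (hK j).2.1.isClosed) hr hr0 hball
  have hbdd : Bornology.IsBounded (insert p (⋃ j, K j)) := by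
    obtain ⟨y, hy⟩ := (hK 0).1
    refine (isBounded_closedBall (x := p) (r := r 0)).subset
      (insert_subset (mem_closedBall_self ?_) ?_)
    · exact dist_nonneg.trans (mem_closedBall.1 (hball 0 hy))
    · exact iUnion_subset fun j =>
        (hball j).trans (closedBall_subset_closedBall (hr (Nat.zero_le j)))
  exact ⟨insert_nonempty _ _, isCompact_of_isClosed_isBounded hclosed hbdd,
    ⟨hclosed, preperfect_insert_iUnion hK hp hr0 hball⟩,
    isTotallyDisconnected_insert_iUnion hK hr hball hgap⟩

theorem exists_isCantorSet_mem_subset_insert [ProperSpace X] (hK : ∀ n, IsCantorSet (K n))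
    (hp : ∀ n, p ∉ K n) (hlim : ∀ r > 0, ∃ n, K n ⊆ closedBall p r) :
    ∃ S, IsCantorSet S ∧ p ∈ S ∧ S ⊆ insert p (⋃ n, K n) := by
  choose! sel hsel using hlim
  have hρ : ∀ n, 0 < infDist p (K n) := fun n =>
    ((hK n).2.1.isClosed.notMem_iff_infDist_pos (hK n).1).1 (hp n)
  -- each radius leaves a gap below the shell chosen at the previous step
  let r : ℕ → ℝ := fun j => Nat.rec 1 (fun _ r => min (r / 2) (infDist p (K (sel r)) / 2)) j
  have hr_succ : ∀ j, r (j + 1) = min (r j / 2) (infDist p (K (sel (r j))) / 2) := fun j => rfl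
  have hr : ∀ j, 0 < r j := fun j => by
    induction j with
    | zero => exact one_pos
    | succ j ih => exact (hr_succ j).symm ▸ lt_min (half_pos ih) (half_pos (hρ _))
  have hr_half : ∀ j, r (j + 1) ≤ r j / 2 := fun j => (hr_succ j).trans_le (min_le_left _ _)
  have hr_le : ∀ j, r j ≤ (1 / 2) ^ j := fun j => by
    induction j with
    | zero => simp [r]
    | succ j ih => rw [pow_succ]; linarith [hr_half j]
  refine ⟨insert p (⋃ j, K (sel (r j))), isCantorSet_insert_iUnion (fun j => hK _)
    (antitone_nat_of_succ_le fun j => by linarith [hr_half j, hr j])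
    (squeeze_zero (fun j => (hr j).le) hr_le
      (tendsto_pow_atTop_nhds_zero_of_lt_one (by norm_num) (by norm_num)))
    (fun j => hsel _ (hr j))
    (fun j => (hr_succ j).trans_lt ((min_le_right _ _).trans_lt (half_lt_self (hρ _)))),
    mem_insert _ _, insert_subset_insert (iUnion_subset fun j => subset_iUnion K _)⟩

lemma IsCantorSet.isMycielski_union {S : Set X} (hS : IsCantorSet S) (hK : ∀ n, IsCantorSet (K n)) :
    IsMycielski (S ∪ ⋃ n, K n) :=
  ⟨fun n => Nat.rec (motive := fun _ => Set X) S (fun k _ => K k) n,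
    fun n => by cases n; exacts [hS, hK _],
    (union_iUnion_nat_succ fun n => Nat.rec (motive := fun _ => Set X) S (fun k _ => K k) n)⟩

theorem isMycielski_insert_iUnion [ProperSpace X] (hK : ∀ n, IsCantorSet (K n))
    (hp : ∀ n, p ∉ K n) (hlim : ∀ r > 0, ∃ n, K n ⊆ closedBall p r) :
    IsMycielski (insert p (⋃ n, K n)) := by
  obtain ⟨S, hS, hpS, hSK⟩ := exists_isCantorSet_mem_subset_insert hK hp hlim
  have hSK' : insert p (⋃ n, K n) = S ∪ ⋃ n, K n :=
    Subset.antisymm (insert_subset (Or.inl hpS) subset_union_right)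
      (union_subset hSK (subset_insert _ _))
  exact hSK' ▸ hS.isMycielski_union hK

end CantorSets

section Orbits

variable {X : Type*} [MetricSpace X] {f : X → X} {x y : X}

lemma MapClusterPt.iterate (h : MapClusterPt y atTop fun n => f^[n] x) (m : ℕ) :
    MapClusterPt y atTop fun n => f^[n] (f^[m] x) := by
  have : (fun n => f^[n] (f^[m] x)) = (fun n => f^[n] x) ∘ (· + m) :=
    funext fun n => (iterate_add_apply f n m x).symm
  rw [this, MapClusterPt, ← map_map, map_add_atTop_eq_nat]
  exact h

lemma mem_tran_inter_rec (h : ∀ y, MapClusterPt y atTop fun n => f^[n] x) :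
    x ∈ Tran f ∩ Rec f :=
  ⟨fun y => closure_mono (image_subset_range _ _)
    (mapClusterPt_atTop_iff_forall_mem_closure.1 (h y) 0), (h x).tendsto_subseq⟩

end Orbits

theorem exists_scrambled_cantor_family {X : Type*} [MetricSpace X] [CompactSpace X] [Nontrivial X]
    {f : X → X} (hf : Continuous f) (hspec : SpecProp f) (hsurj : Surjective f) {p : X}
    (hp : f p = p) :
    ∃ ε > 0, ∃ φ : (ℕ → Bool) → X, Continuous φ ∧
      (∀ α y, MapClusterPt y atTop fun n => f^[n] (φ α)) ∧
      (∀ α β a b, (α, a) ≠ (β, b) → IsDistScrambledPair f ε (f^[a] (φ α)) (f^[b] (φ β))) ∧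
      (∀ α b, IsDistScrambledPair f ε p (f^[b] (φ α))) ∧
      ∀ r > 0, ∃ n, ∀ α, dist (f^[n] (φ α)) p ≤ r := by
  obtain ⟨z, ζ, hζ, hz⟩ := exists_forall_le_dist_iterate hf hspec hsurj hp
  obtain ⟨κ, hκ, seed, hseed⟩ := exists_lag_separated hf hspec hsurj hp
  set δ := min ζ κ / 3 with hδ_def
  have hδ : 0 < δ := by positivity
  have hz' : ∀ j, 3 * δ ≤ dist p (f^[j] z) := fun j => by linarith [min_le_left ζ κ, hz j]
  have hseed' : ∀ c, 0 < c → ∀ j, 3 * δ ≤ dist (f^[j] (seed c)) (f^[j + c] (seed c)) :=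
    fun c hc j => by linarith [min_le_right ζ κ, hseed c hc j]
  obtain ⟨A, hA, Φ, hΦ, hΦcont⟩ := hspec.exists_shadowsOnEras hf hsurj hδ
  set w := TopologicalSpace.denseSeq X
  have hφ : ∀ α, ShadowsOnEras f A δ (Φ (eraTarget w p z seed α)) (eraTarget w p z seed α) :=
    fun α => hΦ _
  exact ⟨δ, hδ, fun α => Φ (eraTarget w p z seed α), continuous_eraTarget hΦcont,
    mapClusterPt_of_eraTarget hA hφ (TopologicalSpace.denseRange_denseSeq X),
    fun α β a b => isDistScrambledPair_of_eraTarget hA hφ hp hδ hz' hseed',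
    isDistScrambledPair_fixed_of_eraTarget hA hφ hp hδ hz',
    fun r hr => exists_forall_dist_iterate_le_of_eraTarget hφ hr⟩

theorem specification_implies_invariant_scrambled_set
    {X : Type*} [MetricSpace X] [CompactSpace X] [Nontrivial X]
    (f : X → X) (hf : Continuous f) (hsurj : Function.Surjective f)
    (hspec : SpecProp f)
    (p : X) (hp : f p = p) :
    ∃ ε : ℝ, 0 < ε ∧ ∃ D : Set X, IsMycielski D ∧ Dense D ∧ DistScrambled f D ε ∧
      f '' D ⊆ D ∧ p ∈ D ∧ D ⊆ (Tran f ∩ Rec f) ∪ {p} := by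
  obtain ⟨ε, hε, φ, hφ, hω, hpair, hppair, hret⟩ :=
    exists_scrambled_cantor_family hf hspec hsurj hp
  set C : ℕ → Set X := fun m => range fun α => f^[m] (φ α)
  have hC : ∀ m, IsCantorSet (C m) := fun m => isCantorSet_range ((hf.iterate m).comp hφ)
    fun α β h => by_contra fun hne => (hpair α β m m (by simpa using hne)).ne hε h
  have hpC : ∀ m, p ∉ C m := by
    rintro m ⟨α, hα⟩
    exact (hppair α m).ne hε hα.symm
  have hmem : ∀ m α, f^[m] (φ α) ∈ insert p (⋃ m, C m) :=
    fun m α => mem_insert_of_mem _ (mem_iUnion_of_mem m ⟨α, rfl⟩)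
  refine ⟨ε, hε, insert p (⋃ m, C m), isMycielski_insert_iUnion hC hpC fun r hr => ?_,
    (mem_tran_inter_rec (hω fun _ => false)).1.mono (range_subset_iff.2 fun n => hmem n _),
    ?_, ?_, mem_insert p _, ?_⟩
  · obtain ⟨n, hn⟩ := hret r hr
    exact ⟨n, range_subset_iff.2 fun α => Metric.mem_closedBall.2 (hn α)⟩
  · rintro _ (rfl | ⟨_, ⟨a, rfl⟩, α, rfl⟩) _ (rfl | ⟨_, ⟨b, rfl⟩, β, rfl⟩) hxy
    · exact absurd rfl hxy
    · exact hppair β b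
    · exact (hppair α a).symm
    · exact hpair α β a b fun h => hxy (by simp_all)
  · rintro _ ⟨_, rfl | ⟨_, ⟨m, rfl⟩, α, rfl⟩, rfl⟩
    · rw [hp]
      exact mem_insert _ _
    · exact (iterate_succ_apply' f m (φ α)) ▸ hmem (m + 1) α
  · rintro _ (rfl | ⟨_, ⟨m, rfl⟩, α, rfl⟩)
    · exact Or.inr rfl
    · exact Or.inl (mem_tran_inter_rec fun y => (hω α y).iterate m)
end
end

section
/- Let (X,f) be a dynamical system and let x ∈ X be a point such that x and f(x) are proximal. Then f has a fixed point. -/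
open Filter Set

theorem fixed_point_of_proximal_to_image
    {X : Type*} [MetricSpace X] [CompactSpace X]
    (f : X → X) (hf : Continuous f)
    (x : X)
    (hprox : liminf (fun n : ℕ => dist (f^[n] x) (f^[n] (f x))) atTop = 0) :
    ∃ p : X, f p = p := by
  obtain ⟨p, -, hp⟩ := isCompact_univ.exists_isMinOn ⟨x, mem_univ x⟩
    ((continuous_id.dist hf).continuousOn (s := univ))
  refine ⟨p, ?_⟩
  have key : ∀ n : ℕ, dist p (f p) ≤ dist (f^[n] x) (f^[n] (f x)) := by
    intro n
    have : f^[n] (f x) = f (f^[n] x) := by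
      rw [← Function.iterate_succ_apply, Function.iterate_succ_apply']
    rw [this]
    exact hp (mem_univ _)
  by_contra h
  have hpos : 0 < dist p (f p) := by
    rcases (dist_nonneg (x := p) (y := f p)).lt_or_eq with h1 | h1
    · exact h1
    · exact absurd (dist_eq_zero.mp h1.symm).symm h
  have hcb : IsCoboundedUnder (· ≥ ·) atTop (fun n : ℕ => dist (f^[n] x) (f^[n] (f x))) :=
    isCoboundedUnder_ge_of_le atTop (fun n =>
      Metric.dist_le_diam_of_mem isCompact_univ.isBounded (mem_univ _) (mem_univ _))
  have hlt : liminf (fun n : ℕ => dist (f^[n] x) (f^[n] (f x))) atTop < dist p (f p) := by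
    rw [hprox]; exact hpos
  have := frequently_lt_of_liminf_lt (f := atTop) hcb hlt
  obtain ⟨n, hn⟩ := this.exists
  exact absurd hn (not_lt.mpr (key n))
end

section
/- Let Π ⊆ Σ₅ be the set of all x ∈ {0,1,2,3,4}^ℤ containing no block from the forbidden set F = {1 0ᵏ 3, 1 0ᵏ 4, 2 0ᵏ 1, 2 0ᵏ 4, 3 0ᵏ 2, 3 0ᵏ 1, 4 0ᵏ 2, 4 0ᵏ 3 : k ∈ ℕ ∪ {0}} (where 0ᵏ denotes the word of k consecutive symbols 0). Then Π is a subshift which is not a shift of finite type. -/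
open Filter Set

/-- The shift map on `Σ_n = (Fin n)^ℤ`. -/
def shiftMap {n : ℕ} (x : ℤ → Fin n) : ℤ → Fin n := fun i => x (i + 1)

/-- A subshift: a nonempty closed strongly shift-invariant subset of `Σ_n`. -/
def IsSubshift {n : ℕ} (Y : Set (ℤ → Fin n)) : Prop :=
  Y.Nonempty ∧ IsClosed Y ∧ shiftMap '' Y = Y

/-- A subshift of finite type: membership is determined by a set of allowed windows of
some fixed length `m > 0`. -/
def IsSFT {n : ℕ} (Y : Set (ℤ → Fin n)) : Prop :=
  IsSubshift Y ∧ ∃ m : ℕ, 0 < m ∧ ∃ M : Set (Fin m → Fin n),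
    ∀ x : ℤ → Fin n, x ∈ Y ↔ ∀ i : ℤ, (fun t : Fin m => x (i + (t : ℕ))) ∈ M

/-- The pairs `(a,b)` such that `a 0ᵏ b` is a forbidden word of the sofic shift `Π`. -/
def ForbiddenPair (a b : Fin 5) : Prop :=
  (a = 1 ∧ b = 3) ∨ (a = 1 ∧ b = 4) ∨ (a = 2 ∧ b = 1) ∨ (a = 2 ∧ b = 4) ∨
  (a = 3 ∧ b = 2) ∨ (a = 3 ∧ b = 1) ∨ (a = 4 ∧ b = 2) ∨ (a = 4 ∧ b = 3)

/-- The set `Π`: points of `{0,1,2,3,4}^ℤ` containing no block of the form `a 0ᵏ b` with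
`(a,b)` a forbidden pair. -/
def PiShift : Set (ℤ → Fin 5) :=
  {x | ∀ i j : ℤ, i < j → (∀ t : ℤ, i < t → t < j → x t = 0) →
    ¬ ForbiddenPair (x i) (x j)}

/-!
`Π` is cut out by forbidding the blocks `a 0ᵏ b` for the pairs `(a, b)` of a relation, which
makes it closed and shift invariant. It is not of finite type: if membership were decided by
windows of length `m`, then the points `…0 1 0…` and `…0 3 0…` (with the `3` at position `m`)
would agree on the `m - 1` zeros between positions `0` and `m`, so every window of their splice
`…0 1 0ᵐ⁻¹ 3 0…` would be a window of one of them, and the splice would lie in `Π`, although it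
contains the forbidden block `1 0ᵐ⁻¹ 3`.
-/

def gapShift {α : Type*} [Zero α] (R : α → α → Prop) : Set (ℤ → α) :=
  {x | ∀ i j : ℤ, i < j → (∀ t : ℤ, i < t → t < j → x t = 0) → ¬ R (x i) (x j)}

theorem piShift_eq_gapShift : PiShift = gapShift ForbiddenPair := rfl

section GapShift

variable {α : Type*} [Zero α] {R : α → α → Prop}

theorem isClosed_gapShift [TopologicalSpace α] [DiscreteTopology α] :
    IsClosed (gapShift R) := by
  have hzeros (i j : ℤ) : IsOpen {x : ℤ → α | ∀ t, i < t → t < j → x t = 0} := by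
    have : {x : ℤ → α | ∀ t, i < t → t < j → x t = 0} =
        ⋂ t ∈ Ioo i j, (fun x => x t) ⁻¹' {0} := by
      ext
      simp [and_imp]
    rw [this]
    exact (finite_Ioo i j).isOpen_biInter fun t _ =>
      (isOpen_discrete _).preimage (continuous_apply t)
  have hpair (i j : ℤ) : IsClosed {x : ℤ → α | ¬ R (x i) (x j)} :=
    (isClosed_discrete {p : α × α | ¬ R p.1 p.2}).preimage (f := fun x : ℤ → α => (x i, x j))
      (by fun_prop)
  simp only [gapShift, ofPred_forall]
  exact isClosed_iInter fun i => isClosed_iInter fun j =>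
    isClosed_iInter fun _ => isClosed_imp (hzeros i j) (hpair i j)

theorem comp_add_mem_gapShift {x : ℤ → α} (hx : x ∈ gapShift R) (c : ℤ) :
    (fun t => x (t + c)) ∈ gapShift R := fun i j hij hzeros =>
  hx (i + c) (j + c) (by omega) fun t hi hj => by
    simpa using hzeros (t - c) (by omega) (by omega)

theorem single_mem_gapShift (hR : ∀ a b, R a b → a ≠ 0 ∧ b ≠ 0) (p : ℤ) (a : α) :
    Pi.single p a ∈ gapShift R := by
  intro i j hij _ hRij
  obtain ⟨hi_ne, hj_ne⟩ := hR _ _ hRij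
  by_cases hip : i = p
  · exact hj_ne (Pi.single_eq_of_ne (show j ≠ p by omega) _)
  · exact hi_ne (Pi.single_eq_of_ne hip _)

end GapShift

theorem image_shiftMap_gapShift {n : ℕ} [NeZero n] (R : Fin n → Fin n → Prop) :
    shiftMap '' gapShift R = gapShift R := by
  ext x
  constructor
  · rintro ⟨y, hy, rfl⟩
    exact comp_add_mem_gapShift hy 1
  · intro hx
    refine ⟨fun t => x (t - 1), comp_add_mem_gapShift hx (-1), ?_⟩
    funext t
    simp [shiftMap]

theorem splice_mem_of_mem_iff_windows {α : Type*} {Y : Set (ℤ → α)} {m : ℕ}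
    {M : Set (Fin m → α)}
    (hM : ∀ x, x ∈ Y ↔ ∀ i : ℤ, (fun t : Fin m => x (i + (t : ℕ))) ∈ M)
    {x y : ℤ → α} (hx : x ∈ Y) (hy : y ∈ Y) {k : ℤ}
    (hxy : ∀ t, k < t + m → t < k → x t = y t) :
    (fun t => if t < k then x t else y t) ∈ Y := by
  refine (hM _).2 fun i => ?_
  by_cases hik : i + m ≤ k
  · convert (hM x).1 hx i using 2 with t
    exact if_pos (by omega)
  · convert (hM y).1 hy i using 2 with t
    split_ifs with htk
    · exact hxy _ (by omega) htk
    · rfl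

theorem PiShift_subshift_not_SFT :
    IsSubshift PiShift ∧ ¬ IsSFT PiShift := by
  have hR : ∀ a b, ForbiddenPair a b → a ≠ 0 ∧ b ≠ 0 := by
    unfold ForbiddenPair; decide
  rw [piShift_eq_gapShift]
  refine ⟨⟨⟨_, single_mem_gapShift hR 0 0⟩, isClosed_gapShift,
    image_shiftMap_gapShift _⟩, ?_⟩
  rintro ⟨-, m, hm, M, hM⟩
  replace hm : (0 : ℤ) < m := by exact_mod_cast hm
  have hsplice := splice_mem_of_mem_iff_windows hM (single_mem_gapShift hR 0 1)
    (single_mem_gapShift hR m 3) (k := m) fun t ht htm => by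
      rw [Pi.single_eq_of_ne (by omega), Pi.single_eq_of_ne (by omega)]
  refine hsplice 0 m hm (fun t ht htm => ?_) ?_
  · simp [htm, Pi.single_eq_of_ne (show t ≠ 0 by omega)]
  · show ForbiddenPair (if (0 : ℤ) < m then _ else _) (if (m : ℤ) < m then _ else _)
    rw [if_pos hm, if_neg (lt_irrefl _), Pi.single_eq_same, Pi.single_eq_same]
    exact Or.inl ⟨rfl, rfl⟩
end
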